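/- arXiv:math/0609500 — 8 statements merged into one kernel-verified Lean document; each statement's English description precedes it below -/
import Mathlib

section
/- Let (V,⟨·,·⟩,A) be a Riemannian 0-model and suppose there exists an orthogonal direct sum decomposition V = V₁ ⊕ … ⊕ V_k ⊕ W with dim V_i = 2 for every i such that A(x,y,z,w) = 0 unless all four vectors x, y, z, w lie in one and the same summand V_i. Then the model is skew Tsankov, i.e. 𝒜(x,y) ∘ 𝒜(u,v) = 𝒜(u,v) ∘ 𝒜(x,y) for all x,y,u,v ∈ V. -/
/-!
Writing `x = ∑ i, xᵢ + x_W` along the decomposition, `𝓐(x, y) = ∑ i, 𝓐(xᵢ, y)`, and each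
`𝓐(xᵢ, y)` maps `V` into `Vᵢ` and kills every other summand. Operators attached to different
summands therefore compose to zero in either order, while skew-adjoint operators with range in
the same plane `Vᵢ` are all multiples of the quarter turn of `Vᵢ`, hence commute.
-/

open scoped RealInnerProductSpace

open Module

theorem Submodule.exists_sum_add_of_iSup_sup_eq_top {R M ι : Type*} [Ring R] [AddCommGroup M]
    [Module R M] [Fintype ι] {Vs : ι → Submodule R M} {W : Submodule R M}
    (hspan : (⨆ i, Vs i) ⊔ W = ⊤) (x : M) :
    ∃ a : ι → M, (∀ i, a i ∈ Vs i) ∧ ∃ g ∈ W, x = ∑ i, a i + g := by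
  obtain ⟨p, hp, g, hg, rfl⟩ := Submodule.mem_sup.mp (hspan ▸ Submodule.mem_top : x ∈ _)
  obtain ⟨μ, rfl⟩ := (Submodule.mem_iSup_finset_iff_exists_sum Vs p).mp
    (by simpa using hp : p ∈ ⨆ i ∈ Finset.univ, Vs i)
  exact ⟨fun i => μ i, fun i => (μ i).2, g, hg, rfl⟩

section TwoDimensional

variable {V : Type*} [NormedAddCommGroup V] [InnerProductSpace ℝ V] {K : Submodule ℝ V}

theorem exists_eq_smul_rotation (b : OrthonormalBasis (Fin 2) ℝ K) {B : V →ₗ[ℝ] V}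
    (hskew : ∀ x y, ⟪B x, y⟫ = -⟪x, B y⟫) (hB : ∀ x, B x ∈ K) :
    ∃ β : ℝ, ∀ x, B x = β • (⟪(b 0 : V), x⟫ • (b 1 : V) - ⟪(b 1 : V), x⟫ • (b 0 : V)) := by
  have expand : ∀ x, B x = ⟪(b 0 : V), B x⟫ • (b 0 : V) + ⟪(b 1 : V), B x⟫ • (b 1 : V) := by
    intro x
    simpa [Fin.sum_univ_two, eq_comm] using congrArg K.subtype (b.sum_repr' ⟨B x, hB x⟩)
  have coeff : ∀ y x, ⟪y, B x⟫ = -⟪B y, x⟫ := fun y x => by linarith [hskew y x]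
  have diag : ∀ y, ⟪y, B y⟫ = 0 := fun y => by linarith [coeff y y, real_inner_comm y (B y)]
  have unit : ∀ i, ⟪(b i : V), (b i : V)⟫ = 1 := fun i => by
    rw [← Submodule.coe_inner, b.inner_eq_one]
  set β := ⟪(b 1 : V), B (b 0)⟫
  have hB0 : B (b 0) = β • (b 1 : V) := by rw [expand (b 0), diag, zero_smul, zero_add]
  have hB1 : B (b 1) = -β • (b 0 : V) := by
    rw [expand (b 1), diag, coeff, hB0, real_inner_smul_left, unit, zero_smul, add_zero, mul_one]
  refine ⟨β, fun x => ?_⟩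
  rw [expand x, coeff, coeff, hB0, hB1, real_inner_smul_left, real_inner_smul_left]
  module

theorem commute_of_finrank_eq_two (hK : finrank ℝ K = 2) {B C : V →ₗ[ℝ] V}
    (hBskew : ∀ x y, ⟪B x, y⟫ = -⟪x, B y⟫) (hB : ∀ x, B x ∈ K)
    (hCskew : ∀ x y, ⟪C x, y⟫ = -⟪x, C y⟫) (hC : ∀ x, C x ∈ K) : Commute B C := by
  have : FiniteDimensional ℝ K := Module.finite_of_finrank_eq_succ hK
  let b := (stdOrthonormalBasis ℝ K).reindex (finCongr hK)
  obtain ⟨β, hβ⟩ := exists_eq_smul_rotation b hBskew hB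
  obtain ⟨γ, hγ⟩ := exists_eq_smul_rotation b hCskew hC
  refine LinearMap.ext fun x => ?_
  rw [Module.End.mul_apply, Module.End.mul_apply, hγ x, map_smul, hβ, hβ x, map_smul, hγ,
    smul_comm]

end TwoDimensional

structure IsOrthogonalDecomposition {V ι : Type*} [NormedAddCommGroup V]
    [InnerProductSpace ℝ V] (Vs : ι → Submodule ℝ V) (W : Submodule ℝ V) : Prop where
  inner_eq_zero : ∀ i j, i ≠ j → ∀ x ∈ Vs i, ∀ y ∈ Vs j, ⟪x, y⟫ = 0
  inner_eq_zero_of_mem_rest : ∀ i, ∀ x ∈ Vs i, ∀ y ∈ W, ⟪x, y⟫ = 0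
  iSup_sup_eq_top : (⨆ i, Vs i) ⊔ W = ⊤

theorem IsOrthogonalDecomposition.mem_of_forall_inner_eq_zero {V ι : Type*}
    [NormedAddCommGroup V] [InnerProductSpace ℝ V] [Fintype ι] {Vs : ι → Submodule ℝ V}
    {W : Submodule ℝ V} (hD : IsOrthogonalDecomposition Vs W) {i : ι} {q : V}
    (hV : ∀ j, j ≠ i → ∀ y ∈ Vs j, ⟪q, y⟫ = 0) (hW : ∀ y ∈ W, ⟪q, y⟫ = 0) : q ∈ Vs i := by
  obtain ⟨a, ha, g, hg, rfl⟩ := Submodule.exists_sum_add_of_iSup_sup_eq_top hD.iSup_sup_eq_top q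
  have inner_summand : ∀ j, ⟪∑ i, a i + g, a j⟫ = ⟪a j, a j⟫ := fun j => by
    rw [inner_add_left, sum_inner, Finset.sum_eq_single j
      (fun i _ hij => hD.inner_eq_zero i j hij _ (ha i) _ (ha j)) (by simp),
      real_inner_comm (a j) g, hD.inner_eq_zero_of_mem_rest j _ (ha j) g hg, add_zero]
  have inner_rest : ⟪∑ i, a i + g, g⟫ = ⟪g, g⟫ := by
    rw [inner_add_left, sum_inner,
      Finset.sum_eq_zero (fun i _ => hD.inner_eq_zero_of_mem_rest i _ (ha i) g hg), zero_add]
  have ha0 : ∀ j, j ≠ i → a j = 0 := fun j hj =>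
    inner_self_eq_zero.mp <| (inner_summand j).symm.trans (hV j hj _ (ha j))
  have hg0 : g = 0 := inner_self_eq_zero.mp <| inner_rest.symm.trans (hW g hg)
  rw [Finset.sum_eq_single i (fun j _ => ha0 j) (by simp), hg0, add_zero]
  exact ha i

section CurvatureOperator

variable {V : Type*} [NormedAddCommGroup V] [InnerProductSpace ℝ V]
  {A : V →ₗ[ℝ] V →ₗ[ℝ] V →ₗ[ℝ] V →ₗ[ℝ] ℝ} {𝓐 : V → V → V →ₗ[ℝ] V}

theorem inner_curvOp_apply_eq_neg (hsymm : ∀ x y z w, A x y z w = A z w x y)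
    (hanti : ∀ x y z w, A x y z w = -A y x z w) (h𝓐 : ∀ x y z w, ⟪𝓐 x y z, w⟫ = A x y z w)
    (a b x y : V) : ⟪𝓐 a b x, y⟫ = -⟪x, 𝓐 a b y⟫ := by
  rw [h𝓐, real_inner_comm, h𝓐, hsymm, hanti, hsymm]

theorem curvOp_sum_add {ι : Type*} (h𝓐 : ∀ x y z w, ⟪𝓐 x y z, w⟫ = A x y z w)
    (s : Finset ι) (a : ι → V) {g : V} (hg : A g = 0) (y : V) :
    𝓐 (∑ i ∈ s, a i + g) y = ∑ i ∈ s, 𝓐 (a i) y :=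
  LinearMap.ext fun z => ext_inner_right ℝ fun w => by
    simp [h𝓐, sum_inner, hg, LinearMap.sum_apply]

end CurvatureOperator

def IsBlockDiagonal {R M ι : Type*} [CommRing R] [AddCommGroup M] [Module R M]
    (A : M →ₗ[R] M →ₗ[R] M →ₗ[R] M →ₗ[R] R) (Vs : ι → Submodule R M) : Prop :=
  ∀ x y z w, A x y z w ≠ 0 → ∃ i, x ∈ Vs i ∧ y ∈ Vs i ∧ z ∈ Vs i ∧ w ∈ Vs i

namespace IsBlockDiagonal

variable {V ι : Type*} [NormedAddCommGroup V] [InnerProductSpace ℝ V]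
  {A : V →ₗ[ℝ] V →ₗ[ℝ] V →ₗ[ℝ] V →ₗ[ℝ] ℝ} {Vs : ι → Submodule ℝ V} {W : Submodule ℝ V}
  {𝓐 : V → V → V →ₗ[ℝ] V}

theorem apply_eq_zero_of_orthogonal (hA : IsBlockDiagonal A Vs) {x : V}
    (hx : ∀ i, ∀ y ∈ Vs i, ⟪y, x⟫ = 0) : A x = 0 := by
  refine LinearMap.ext fun y => LinearMap.ext fun z => LinearMap.ext fun w => ?_
  by_contra h
  obtain ⟨i, hi, -⟩ := hA _ _ _ _ h
  rw [inner_self_eq_zero.mp (hx i x hi)] at h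
  simp at h

theorem mem_of_apply_ne_zero (hA : IsBlockDiagonal A Vs)
    (horth : ∀ i j, i ≠ j → ∀ x ∈ Vs i, ∀ y ∈ Vs j, ⟪x, y⟫ = 0) {x y z w : V} {i : ι}
    (h : A x y z w ≠ 0) (hx : x ∈ Vs i) : y ∈ Vs i ∧ z ∈ Vs i ∧ w ∈ Vs i := by
  obtain ⟨j, hxj, hy, hz, hw⟩ := hA _ _ _ _ h
  obtain rfl : j = i := by
    by_contra hji
    rw [inner_self_eq_zero.mp (horth j i hji x hxj x hx)] at h
    simp at h
  exact ⟨hy, hz, hw⟩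

theorem curvOp_apply_eq_zero (hA : IsBlockDiagonal A Vs)
    (horth : ∀ i j, i ≠ j → ∀ x ∈ Vs i, ∀ y ∈ Vs j, ⟪x, y⟫ = 0)
    (h𝓐 : ∀ x y z w, ⟪𝓐 x y z, w⟫ = A x y z w) {a z : V} {i j : ι} (ha : a ∈ Vs i)
    (hz : z ∈ Vs j) (hij : i ≠ j) (b : V) : 𝓐 a b z = 0 := by
  refine ext_inner_right ℝ fun w => ?_
  rw [h𝓐, inner_zero_left]
  by_contra h
  have hz0 : z = 0 := inner_self_eq_zero.mp <|
    horth i j hij z (hA.mem_of_apply_ne_zero horth h ha).2.1 z hz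
  simp [hz0] at h

theorem curvOp_apply_mem [Fintype ι] (hA : IsBlockDiagonal A Vs)
    (hD : IsOrthogonalDecomposition Vs W) (h𝓐 : ∀ x y z w, ⟪𝓐 x y z, w⟫ = A x y z w) {a : V}
    {i : ι} (ha : a ∈ Vs i) (b z : V) : 𝓐 a b z ∈ Vs i := by
  refine hD.mem_of_forall_inner_eq_zero (fun j hji w hw => ?_) fun w hw => ?_
  all_goals
    rw [h𝓐]
    by_contra h
    have hwi := (hA.mem_of_apply_ne_zero hD.inner_eq_zero h ha).2.2
  · simp [inner_self_eq_zero.mp (hD.inner_eq_zero j i hji w hw w hwi)] at h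
  · simp [inner_self_eq_zero.mp (hD.inner_eq_zero_of_mem_rest i w hwi w hw)] at h

theorem commute_curvOp [Fintype ι] (hA : IsBlockDiagonal A Vs)
    (hD : IsOrthogonalDecomposition Vs W) (hdim : ∀ i, finrank ℝ (Vs i) = 2)
    (hsymm : ∀ x y z w, A x y z w = A z w x y) (hanti : ∀ x y z w, A x y z w = -A y x z w)
    (h𝓐 : ∀ x y z w, ⟪𝓐 x y z, w⟫ = A x y z w) {a c : V} {i j : ι} (ha : a ∈ Vs i)
    (hc : c ∈ Vs j) (b d : V) : Commute (𝓐 a b) (𝓐 c d) := by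
  obtain rfl | hij := eq_or_ne i j
  · exact commute_of_finrank_eq_two (hdim i) (inner_curvOp_apply_eq_neg hsymm hanti h𝓐 a b)
      (hA.curvOp_apply_mem hD h𝓐 ha b) (inner_curvOp_apply_eq_neg hsymm hanti h𝓐 c d)
      (hA.curvOp_apply_mem hD h𝓐 hc d)
  · refine LinearMap.ext fun z => ?_
    rw [Module.End.mul_apply, Module.End.mul_apply,
      hA.curvOp_apply_eq_zero hD.inner_eq_zero h𝓐 ha (hA.curvOp_apply_mem hD h𝓐 hc d z) hij,
      hA.curvOp_apply_eq_zero hD.inner_eq_zero h𝓐 hc (hA.curvOp_apply_mem hD h𝓐 ha b z)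
        hij.symm]

end IsBlockDiagonal

theorem skewTsankov_of_decomposition_general
    {V : Type*} [NormedAddCommGroup V] [InnerProductSpace ℝ V]
    (A : V →ₗ[ℝ] V →ₗ[ℝ] V →ₗ[ℝ] V →ₗ[ℝ] ℝ)
    (hsymm : ∀ x y z w : V, A x y z w = A z w x y)
    (hanti : ∀ x y z w : V, A x y z w = - A y x z w)
    (𝓐 : V → V → (V →ₗ[ℝ] V))
    (h𝓐 : ∀ x y z w : V, ⟪𝓐 x y z, w⟫ = A x y z w)
    (k : ℕ) (Vs : Fin k → Submodule ℝ V) (W : Submodule ℝ V)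
    (horth : ∀ i j : Fin k, i ≠ j → ∀ x ∈ Vs i, ∀ y ∈ Vs j, ⟪x, y⟫ = 0)
    (horthW : ∀ i : Fin k, ∀ x ∈ Vs i, ∀ y ∈ W, ⟪x, y⟫ = 0)
    (hspan : (⨆ i, Vs i) ⊔ W = ⊤)
    (hdim : ∀ i, Module.finrank ℝ (Vs i) = 2)
    (hvanish : ∀ x y z w : V, A x y z w ≠ 0 →
      ∃ i, x ∈ Vs i ∧ y ∈ Vs i ∧ z ∈ Vs i ∧ w ∈ Vs i) :
    ∀ x y u v : V, (𝓐 x y) ∘ₗ (𝓐 u v) = (𝓐 u v) ∘ₗ (𝓐 x y) := by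
  intro x y u v
  have hA : IsBlockDiagonal A Vs := hvanish
  have hD : IsOrthogonalDecomposition Vs W := ⟨horth, horthW, hspan⟩
  have hW : ∀ g ∈ W, A g = 0 := fun g hg =>
    hA.apply_eq_zero_of_orthogonal fun i y hy => horthW i y hy g hg
  obtain ⟨a, ha, g, hg, rfl⟩ := Submodule.exists_sum_add_of_iSup_sup_eq_top hspan x
  obtain ⟨c, hc, g', hg', rfl⟩ := Submodule.exists_sum_add_of_iSup_sup_eq_top hspan u
  rw [curvOp_sum_add h𝓐 _ a (hW g hg), curvOp_sum_add h𝓐 _ c (hW g' hg')]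
  exact Commute.sum_left _ _ _ fun i _ => Commute.sum_right _ _ _ fun j _ =>
    hA.commute_curvOp hD hdim hsymm hanti h𝓐 (ha i) (hc j) y v

/-- If a Riemannian `0`-model `(V, ⟨·,·⟩, A)` admits an orthogonal direct sum
decomposition `V = V₁ ⊕ ⋯ ⊕ V_k ⊕ W` with `dim V_i = 2` for every `i` such that
`A(x,y,z,w) = 0` unless all four vectors lie in one and the same summand `V_i`,
then the model is skew Tsankov: the skew-symmetric curvature operators commute. -/
theorem skewTsankov_of_decomposition
    {V : Type*} [NormedAddCommGroup V] [InnerProductSpace ℝ V]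
    [FiniteDimensional ℝ V]
    (A : V →ₗ[ℝ] V →ₗ[ℝ] V →ₗ[ℝ] V →ₗ[ℝ] ℝ)
    (hsymm : ∀ x y z w : V, A x y z w = A z w x y)
    (hanti : ∀ x y z w : V, A x y z w = - A y x z w)
    (hbianchi : ∀ x y z w : V, A x y z w + A y z x w + A z x y w = 0)
    (𝓐 : V → V → (V →ₗ[ℝ] V))
    (h𝓐 : ∀ x y z w : V, ⟪𝓐 x y z, w⟫ = A x y z w)
    (k : ℕ) (Vs : Fin k → Submodule ℝ V) (W : Submodule ℝ V)
    (horth : ∀ i j : Fin k, i ≠ j → ∀ x ∈ Vs i, ∀ y ∈ Vs j, ⟪x, y⟫ = 0)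
    (horthW : ∀ i : Fin k, ∀ x ∈ Vs i, ∀ y ∈ W, ⟪x, y⟫ = 0)
    (hspan : (⨆ i, Vs i) ⊔ W = ⊤)
    (hdim : ∀ i, Module.finrank ℝ (Vs i) = 2)
    (hvanish : ∀ x y z w : V, A x y z w ≠ 0 →
      ∃ i, x ∈ Vs i ∧ y ∈ Vs i ∧ z ∈ Vs i ∧ w ∈ Vs i) :
    ∀ x y u v : V, (𝓐 x y) ∘ₗ (𝓐 u v) = (𝓐 u v) ∘ₗ (𝓐 x y) :=
  skewTsankov_of_decomposition_general A hsymm hanti 𝓐 h𝓐 k Vs W horth horthW hspan hdim hvanish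
end

section
/- Let p ≥ 1, let ψ : ℝ^p → ℝ^{p×p} be a C² map with ψ_{ij} = ψ_{ji}, and fix x ∈ ℝ^p. Denote the standard basis of ℝ^{2p} by X₁,…,X_p,Y₁,…,Y_p; let g be the symmetric bilinear form on ℝ^{2p} with g(X_i,X_j) = ψ_{ij}(x), g(X_i,Y_j) = δ_{ij}, g(Y_i,Y_j) = 0, and let A be the 4-linear form whose only possibly nonzero components on basis vectors are A(X_i,X_j,X_k,X_l) = R_{ijkl} := -½(∂_j∂_kψ_{il} + ∂_i∂_lψ_{jk} - ∂_j∂_lψ_{ik} - ∂_i∂_kψ_{jl})(x). Then: (a) g is nondegenerate (of neutral signature (p,p)); (b) the curvature operators 𝒜(ξ₁,ξ₂) defined by g(𝒜(ξ₁,ξ₂)z,w) = A(ξ₁,ξ₂,z,w) satisfy 𝒜(ξ₁,ξ₂) ∘ 𝒜(ξ₃,ξ₄) = 0 for all ξ₁,ξ₂,ξ₃,ξ₄ ∈ ℝ^{2p}; in particular the model (ℝ^{2p},g,A) is skew Tsankov and every curvature operator 𝒜(ξ₁,ξ₂) is nilpotent of order 2. -/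
/-- The curvature model of a Dunn manifold at a point.  On
`ℝ^{2p} = (Fin p → ℝ) × (Fin p → ℝ)` (first factor spanned by the `X_i`, second by the
`Y_i`) consider the symmetric bilinear form `g` with `g(X_i,X_j) = ψ_{ij}(x)`,
`g(X_i,Y_j) = δ_{ij}`, `g(Y_i,Y_j) = 0`, and the 4-linear form `A` whose only possibly
nonzero components on basis vectors are `A(X_i,X_j,X_k,X_l) = R_{ijkl}` with
`R_{ijkl} = -½(∂_j∂_kψ_{il} + ∂_i∂_lψ_{jk} - ∂_j∂_lψ_{ik} - ∂_i∂_kψ_{jl})(x)`.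
Then (a) `g` is nondegenerate, and (b) the curvature operators `𝓐(ξ₁,ξ₂)` defined by
`g(𝓐(ξ₁,ξ₂)z, w) = A(ξ₁,ξ₂,z,w)` satisfy `𝓐(ξ₁,ξ₂) ∘ 𝓐(ξ₃,ξ₄) = 0`; in particular
the model is skew Tsankov and every curvature operator is nilpotent of order 2. -/
theorem dunn_model_skewTsankov_nilpotent_two
    (p : ℕ) (hp : 1 ≤ p)
    (ψ : (Fin p → ℝ) → Fin p → Fin p → ℝ)
    (hreg : ContDiff ℝ 2 ψ)
    (hψsym : ∀ z i j, ψ z i j = ψ z j i)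
    (x : Fin p → ℝ)
    (D2 : Fin p → Fin p → Fin p → Fin p → ℝ)
    (hD2 : ∀ a b i l, D2 a b i l =
      fderiv ℝ (fun z => fderiv ℝ (fun z' => ψ z' i l) z (Pi.single b 1))
        x (Pi.single a 1))
    (R : Fin p → Fin p → Fin p → Fin p → ℝ)
    (hR : ∀ i j k l, R i j k l =
      -(1 / 2) * (D2 j k i l + D2 i l j k - D2 j l i k - D2 i k j l))
    (A : ((Fin p → ℝ) × (Fin p → ℝ)) → ((Fin p → ℝ) × (Fin p → ℝ)) →
         ((Fin p → ℝ) × (Fin p → ℝ)) → ((Fin p → ℝ) × (Fin p → ℝ)) → ℝ)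
    (hA : ∀ v₁ v₂ v₃ v₄, A v₁ v₂ v₃ v₄ =
      ∑ i, ∑ j, ∑ k, ∑ l, v₁.1 i * v₂.1 j * v₃.1 k * v₄.1 l * R i j k l)
    (g : ((Fin p → ℝ) × (Fin p → ℝ)) → ((Fin p → ℝ) × (Fin p → ℝ)) → ℝ)
    (hg : ∀ v w, g v w =
      (∑ i, ∑ j, v.1 i * w.1 j * ψ x i j) + ∑ i, (v.1 i * w.2 i + v.2 i * w.1 i))
    (𝓐 : ((Fin p → ℝ) × (Fin p → ℝ)) → ((Fin p → ℝ) × (Fin p → ℝ)) →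
      (((Fin p → ℝ) × (Fin p → ℝ)) →ₗ[ℝ] ((Fin p → ℝ) × (Fin p → ℝ))))
    (h𝓐 : ∀ ξ₁ ξ₂ z w, g (𝓐 ξ₁ ξ₂ z) w = A ξ₁ ξ₂ z w) :
    (∀ v, (∀ w, g v w = 0) → v = 0) ∧
    (∀ ξ₁ ξ₂ ξ₃ ξ₄, (𝓐 ξ₁ ξ₂) ∘ₗ (𝓐 ξ₃ ξ₄) = 0) ∧
    (∀ ξ₁ ξ₂ ξ₃ ξ₄, (𝓐 ξ₁ ξ₂) ∘ₗ (𝓐 ξ₃ ξ₄) = (𝓐 ξ₃ ξ₄) ∘ₗ (𝓐 ξ₁ ξ₂)) ∧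
    (∀ ξ₁ ξ₂, (𝓐 ξ₁ ξ₂) ∘ₗ (𝓐 ξ₁ ξ₂) = 0) := by
  have hsingle : ∀ (v : (Fin p → ℝ) × (Fin p → ℝ)) (i : Fin p),
      g v (0, Pi.single i 1) = v.1 i := by
    intro v i
    rw [hg]
    simp [Pi.single_apply, mul_ite, Finset.sum_ite_eq']
  have hnondeg : ∀ v, (∀ w, g v w = 0) → v = 0 := by
    intro v h
    have h1 : ∀ i, v.1 i = 0 := fun i => by
      have := h (0, Pi.single i 1); rwa [hsingle] at this
    have h2 : ∀ i, v.2 i = 0 := fun i => by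
      have := h (Pi.single i 1, 0)
      rw [hg] at this
      simpa [h1, Pi.single_apply, mul_ite, Finset.sum_ite_eq'] using this
    ext i
    · exact h1 i
    · exact h2 i
  have hfst : ∀ ξ₃ ξ₄ z i, (𝓐 ξ₃ ξ₄ z).1 i = 0 := by
    intro ξ₃ ξ₄ z i
    have := h𝓐 ξ₃ ξ₄ z (0, Pi.single i 1)
    rw [hsingle, hA] at this
    simpa using this
  have hcomp : ∀ ξ₁ ξ₂ ξ₃ ξ₄, (𝓐 ξ₁ ξ₂) ∘ₗ (𝓐 ξ₃ ξ₄) = 0 := by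
    intro ξ₁ ξ₂ ξ₃ ξ₄
    apply LinearMap.ext
    intro z
    rw [LinearMap.comp_apply, LinearMap.zero_apply]
    apply hnondeg
    intro w
    rw [h𝓐, hA]
    simp [hfst]
  exact ⟨hnondeg, hcomp, fun ξ₁ ξ₂ ξ₃ ξ₄ => by rw [hcomp, hcomp],
    fun ξ₁ ξ₂ => hcomp ξ₁ ξ₂ ξ₁ ξ₂⟩
end

section
/- Let ν ≥ 1, let f : ℝ^ν → ℝ be C², let u₀ ∈ ℝ^ν, and set H_{ab} := ∂_a∂_b f(u₀). Let Ξ be an invertible symmetric ν×ν real matrix with inverse entries Ξ^{ab}. On V = ℝ^{ν+2} with basis (X, U₁, …, U_ν, Y), let g be the symmetric bilinear form with g(X,X) = -2f(u₀), g(X,Y) = 1, g(U_a,U_b) = Ξ_{ab}, g(Y,Y) = 0, g(X,U_a) = g(Y,U_a) = 0, and let A be the 4-linear form whose only possibly nonzero components on basis vectors are those obtained from A(X,U_a,U_b,X) = H_{ab} via the symmetries A(x,y,z,w) = A(z,w,x,y) = -A(y,x,z,w). Then: (a) g is nondegenerate; (b) A is an algebraic curvature tensor; (c) the curvature operators satisfy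 𝒜(X,U_a)U_b = H_{ab} Y, 𝒜(X,U_a)X = -Σ_{b,c} Ξ^{bc} H_{ac} U_b, and 𝒜(X,U_a)Y = 0; (d) the model (V,g,A) is skew Tsankov, i.e. 𝒜(ξ₁,ξ₂) ∘ 𝒜(ξ₃,ξ₄) = 𝒜(ξ₃,ξ₄) ∘ 𝒜(ξ₁,ξ₂) for all ξᵢ ∈ V. -/
/-!
Write `v = (v₀, v', v₂)` and `θ(v, w) = v₀ w' - w₀ v'`. Then `A(v₁,v₂,v₃,v₄) = -⟨θ(v₁,v₂), H θ(v₃,v₄)⟩`,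
so the curvature symmetries follow from the antisymmetry of `θ` and the symmetry of the Hessian `H`.
Since `g` is nondegenerate, `𝓐(ξ₁,ξ₂)` is determined by `A`, and one checks that
`𝓐(ξ₁,ξ₂) z = (0, -z₀ Ξ⁻¹ c, ⟨c, z'⟩)` with `c = Hᵀ θ(ξ₁,ξ₂)`. Such an operator maps `V` into
`span {U_a, Y}`, where `z₀ = 0`, and that span into `ℝ Y`, so
`𝓐(ξ₃,ξ₄) 𝓐(ξ₁,ξ₂) z = -z₀ ⟨c', Ξ⁻¹ c⟩ Y`, which is symmetric in the two pairs because `Ξ⁻¹` is.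
-/

open Matrix

theorem ContDiffAt.fderiv_fderiv_apply_comm {E F : Type*} [NormedAddCommGroup E]
    [NormedSpace ℝ E] [NormedAddCommGroup F] [NormedSpace ℝ F] {f : E → F} {x : E}
    (hf : ContDiffAt ℝ 2 f x) (v w : E) :
    fderiv ℝ (fun u => fderiv ℝ f u w) x v = fderiv ℝ (fun u => fderiv ℝ f u v) x w := by
  have hdiff : DifferentiableAt ℝ (fderiv ℝ f) x :=
    (hf.fderiv_right (m := 1) le_rfl).differentiableAt one_ne_zero
  rw [fderiv_clm_apply hdiff (differentiableAt_const _),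
    fderiv_clm_apply hdiff (differentiableAt_const _)]
  simpa using hf.isSymmSndFDerivAt (by simp) v w

theorem Matrix.dotProduct_mulVec_eq_sum {R ι : Type*} [CommSemiring R] [Fintype ι]
    (M : Matrix ι ι R) (x y : ι → R) : x ⬝ᵥ M *ᵥ y = ∑ a, ∑ b, M a b * x a * y b := by
  simp only [dotProduct, mulVec, Finset.mul_sum]
  exact Finset.sum_congr rfl fun a _ => Finset.sum_congr rfl fun b _ => by ring

theorem Matrix.IsSymm.dotProduct_mulVec_comm {R ι : Type*} [CommSemiring R] [Fintype ι]
    {M : Matrix ι ι R} (hM : M.IsSymm) (x y : ι → R) : x ⬝ᵥ M *ᵥ y = y ⬝ᵥ M *ᵥ x := by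
  rw [dotProduct_mulVec, ← vecMul_transpose, hM.eq, dotProduct_comm]

namespace Fiedler

variable {R ι : Type*} [CommRing R]

def theta (v w : R × (ι → R) × R) : ι → R := v.1 • w.2.1 - w.1 • v.2.1

theorem theta_swap (v w : R × (ι → R) × R) : theta v w = -theta w v :=
  (neg_sub _ _).symm

theorem theta_X_U [DecidableEq ι] (a : ι) :
    theta ((1 : R), (0 : ι → R), (0 : R)) (0, Pi.single a 1, 0) = Pi.single a 1 := by
  simp [theta]

theorem sum_smul_U [Fintype ι] [DecidableEq ι] (x : ι → R) :
    ∑ b, x b • ((0 : R), (Pi.single b 1 : ι → R), (0 : R)) = (0, x, 0) := by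
  ext <;> simp [Prod.fst_sum, Prod.snd_sum, Finset.sum_apply, Pi.single_apply]

variable [Fintype ι]

def metric (κ : R) (Ξ : Matrix ι ι R) (v w : R × (ι → R) × R) : R :=
  κ * v.1 * w.1 + v.1 * w.2.2 + v.2.2 * w.1 + v.2.1 ⬝ᵥ Ξ *ᵥ w.2.1

def curvature (H : Matrix ι ι R) (v₁ v₂ v₃ v₄ : R × (ι → R) × R) : R :=
  -(theta v₁ v₂ ⬝ᵥ H *ᵥ theta v₃ v₄)

-- `P` stands for `Ξ⁻¹`; `metric_curvatureOp` only needs `Pᵀ * Ξ = 1`.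
def curvatureOp (P H : Matrix ι ι R) (ξ₁ ξ₂ z : R × (ι → R) × R) : R × (ι → R) × R :=
  (0, -z.1 • P *ᵥ (theta ξ₁ ξ₂ ᵥ* H), theta ξ₁ ξ₂ ᵥ* H ⬝ᵥ z.2.1)

theorem curvature_swap_left (H : Matrix ι ι R) (v₁ v₂ v₃ v₄ : R × (ι → R) × R) :
    curvature H v₁ v₂ v₃ v₄ = -curvature H v₂ v₁ v₃ v₄ := by
  rw [curvature, curvature, theta_swap v₁, neg_dotProduct, neg_neg]

theorem curvature_swap_pairs {H : Matrix ι ι R} (hH : H.IsSymm) (v₁ v₂ v₃ v₄ : R × (ι → R) × R) :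
    curvature H v₁ v₂ v₃ v₄ = curvature H v₃ v₄ v₁ v₂ := by
  rw [curvature, curvature, hH.dotProduct_mulVec_comm]

theorem curvature_bianchi {H : Matrix ι ι R} (hH : H.IsSymm) (a b c d : R × (ι → R) × R) :
    curvature H a b c d + curvature H b c a d + curvature H c a b d = 0 := by
  simp only [curvature, theta, mulVec_sub, mulVec_smul, dotProduct_sub, sub_dotProduct,
    dotProduct_smul, smul_dotProduct, smul_eq_mul]
  linear_combination d.1 * a.1 * hH.dotProduct_mulVec_comm b.2.1 c.2.1 +
    d.1 * b.1 * hH.dotProduct_mulVec_comm c.2.1 a.2.1 +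
    d.1 * c.1 * hH.dotProduct_mulVec_comm a.2.1 b.2.1

theorem metric_sub_left (κ : R) (Ξ : Matrix ι ι R) (v v' w : R × (ι → R) × R) :
    metric κ Ξ (v - v') w = metric κ Ξ v w - metric κ Ξ v' w := by
  simp only [metric, Prod.fst_sub, Prod.snd_sub, sub_dotProduct]
  ring

theorem curvatureOp_comm {P : Matrix ι ι R} (hP : P.IsSymm) (H : Matrix ι ι R)
    (ξ₁ ξ₂ ξ₃ ξ₄ z : R × (ι → R) × R) :
    curvatureOp P H ξ₃ ξ₄ (curvatureOp P H ξ₁ ξ₂ z) =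
      curvatureOp P H ξ₁ ξ₂ (curvatureOp P H ξ₃ ξ₄ z) := by
  simp only [curvatureOp, zero_smul, neg_zero, dotProduct_smul, hP.dotProduct_mulVec_comm]

variable [DecidableEq ι]

theorem metric_nondegenerate (κ : R) {Ξ : Matrix ι ι R} (hΞ : IsUnit Ξ.det)
    (v : R × (ι → R) × R) (hv : ∀ w, metric κ Ξ v w = 0) : v = 0 := by
  have h₁ : v.1 = 0 := by simpa [metric] using hv (0, 0, 1)
  have h₃ : v.2.2 = 0 := by simpa [metric, h₁] using hv (1, 0, 0)
  have h₂ : v.2.1 = 0 :=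
    (Nondegenerate.of_det_mem_nonZeroDivisors hΞ.mem_nonZeroDivisors).eq_zero_of_ortho
      fun w => by simpa [metric] using hv (0, w, 0)
  exact Prod.ext h₁ (Prod.ext h₂ h₃)

theorem metric_curvatureOp (κ : R) {Ξ P : Matrix ι ι R} (hP : Pᵀ * Ξ = 1)
    (H : Matrix ι ι R) (ξ₁ ξ₂ z w : R × (ι → R) × R) :
    metric κ Ξ (curvatureOp P H ξ₁ ξ₂ z) w = curvature H ξ₁ ξ₂ z w := by
  have hPΞ : ∀ c : ι → R, P *ᵥ c ⬝ᵥ Ξ *ᵥ w.2.1 = c ⬝ᵥ w.2.1 := fun c => by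
    rw [dotProduct_mulVec, ← vecMul_transpose, vecMul_vecMul, hP, vecMul_one]
  simp only [metric, curvatureOp, curvature, dotProduct_mulVec (theta ξ₁ ξ₂)]
  generalize theta ξ₁ ξ₂ ᵥ* H = c
  simp only [theta, smul_dotProduct, hPΞ, dotProduct_sub, dotProduct_smul, smul_eq_mul]
  ring

theorem eq_curvatureOp (κ : R) {Ξ : Matrix ι ι R} (hΞ : Ξ.IsSymm) (hΞdet : IsUnit Ξ.det)
    (H : Matrix ι ι R)
    {T : R × (ι → R) × R → R × (ι → R) × R → R × (ι → R) × R → R × (ι → R) × R}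
    (hT : ∀ ξ₁ ξ₂ z w, metric κ Ξ (T ξ₁ ξ₂ z) w = curvature H ξ₁ ξ₂ z w)
    (ξ₁ ξ₂ z : R × (ι → R) × R) : T ξ₁ ξ₂ z = curvatureOp Ξ⁻¹ H ξ₁ ξ₂ z := by
  have hP : Ξ⁻¹ᵀ * Ξ = 1 := by rw [hΞ.inv.eq, nonsing_inv_mul Ξ hΞdet]
  refine sub_eq_zero.mp (metric_nondegenerate κ hΞdet _ fun w => ?_)
  rw [metric_sub_left, hT, metric_curvatureOp κ hP, sub_self]

end Fiedler

open Fiedler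

theorem fiedler_model_skewTsankov_general
    (ν : ℕ)
    (f : (Fin ν → ℝ) → ℝ) (hf : ContDiff ℝ 2 f) (u₀ : Fin ν → ℝ)
    (H : Fin ν → Fin ν → ℝ)
    (hH : ∀ a b, H a b =
      fderiv ℝ (fun u => fderiv ℝ f u (Pi.single b 1)) u₀ (Pi.single a 1))
    (Ξ : Matrix (Fin ν) (Fin ν) ℝ) (hΞsym : Ξ.IsSymm) (hΞinv : IsUnit Ξ.det)
    (X : ℝ × (Fin ν → ℝ) × ℝ) (hX : X = (1, 0, 0))
    (U : Fin ν → ℝ × (Fin ν → ℝ) × ℝ) (hU : ∀ a, U a = (0, Pi.single a 1, 0))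
    (Y : ℝ × (Fin ν → ℝ) × ℝ) (hY : Y = (0, 0, 1))
    (g : (ℝ × (Fin ν → ℝ) × ℝ) → (ℝ × (Fin ν → ℝ) × ℝ) → ℝ)
    (hg : ∀ v w, g v w = -2 * f u₀ * v.1 * w.1 + v.1 * w.2.2 + v.2.2 * w.1 +
      ∑ a, ∑ b, Ξ a b * v.2.1 a * w.2.1 b)
    (A : (ℝ × (Fin ν → ℝ) × ℝ) → (ℝ × (Fin ν → ℝ) × ℝ) →
         (ℝ × (Fin ν → ℝ) × ℝ) → (ℝ × (Fin ν → ℝ) × ℝ) → ℝ)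
    (hA : ∀ v₁ v₂ v₃ v₄, A v₁ v₂ v₃ v₄ =
      -∑ a, ∑ b, H a b * (v₁.1 * v₂.2.1 a - v₂.1 * v₁.2.1 a) *
        (v₃.1 * v₄.2.1 b - v₄.1 * v₃.2.1 b))
    (𝓐 : (ℝ × (Fin ν → ℝ) × ℝ) → (ℝ × (Fin ν → ℝ) × ℝ) →
      ((ℝ × (Fin ν → ℝ) × ℝ) →ₗ[ℝ] (ℝ × (Fin ν → ℝ) × ℝ)))
    (h𝓐 : ∀ ξ₁ ξ₂ z w, g (𝓐 ξ₁ ξ₂ z) w = A ξ₁ ξ₂ z w) :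
    -- (a) g is nondegenerate
    (∀ v, (∀ w, g v w = 0) → v = 0) ∧
    -- (b) A is an algebraic curvature tensor
    (∀ a b c d, A a b c d = A c d a b) ∧
    (∀ a b c d, A a b c d = - A b a c d) ∧
    (∀ a b c d, A a b c d + A b c a d + A c a b d = 0) ∧
    (∀ a b, A X (U a) (U b) X = H a b) ∧
    -- (c) the curvature operators
    (∀ a b, 𝓐 X (U a) (U b) = H a b • Y) ∧
    (∀ a, 𝓐 X (U a) X = - ∑ b, ∑ c, (Ξ⁻¹ b c * H a c) • U b) ∧
    (∀ a, 𝓐 X (U a) Y = 0) ∧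
    -- (d) the model is skew Tsankov
    (∀ ξ₁ ξ₂ ξ₃ ξ₄, (𝓐 ξ₁ ξ₂) ∘ₗ (𝓐 ξ₃ ξ₄) = (𝓐 ξ₃ ξ₄) ∘ₗ (𝓐 ξ₁ ξ₂)) := by
  have hHsymm : (of H).IsSymm := by
    ext a b
    simp only [transpose_apply, of_apply, hH]
    exact hf.contDiffAt.fderiv_fderiv_apply_comm _ _
  obtain rfl : g = metric (-2 * f u₀) Ξ := by
    funext v w
    rw [hg, metric, dotProduct_mulVec_eq_sum]
  obtain rfl : A = curvature (of H) := by
    funext v₁ v₂ v₃ v₄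
    rw [hA, curvature, dotProduct_mulVec_eq_sum]
    rfl
  have h𝓐op := eq_curvatureOp _ hΞsym hΞinv _ h𝓐
  subst hX hY
  refine ⟨metric_nondegenerate _ hΞinv, curvature_swap_pairs hHsymm, curvature_swap_left _,
    curvature_bianchi hHsymm, fun a b => ?_, fun a b => ?_, fun a => ?_, fun a => ?_,
    fun ξ₁ ξ₂ ξ₃ ξ₄ => LinearMap.ext fun z => ?_⟩
  · simp [hU, curvature, theta, mulVec_neg]
  · simp [hU, h𝓐op, curvatureOp, theta_X_U]
  · simp only [hU, ← Finset.sum_smul, sum_smul_U]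
    simp only [h𝓐op, curvatureOp, theta_X_U, single_vecMul, of_row, one_smul, neg_smul,
      dotProduct_zero, Prod.neg_mk, neg_zero]
    rfl
  · simp [hU, h𝓐op, curvatureOp, theta_X_U]
  · simp [h𝓐op, curvatureOp_comm hΞsym.inv]

/-- The curvature model of a Fiedler manifold at a point.  On
`V = ℝ^{ν+2} = ℝ × (Fin ν → ℝ) × ℝ` with basis `X = (1,0,0)`, `U_a = (0, e_a, 0)`,
`Y = (0,0,1)`, let `g` be the symmetric bilinear form with `g(X,X) = -2f(u₀)`,
`g(X,Y) = 1`, `g(U_a,U_b) = Ξ_{ab}`, `g(Y,Y) = 0`, `g(X,U_a) = g(Y,U_a) = 0`, and let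
`A` be the 4-linear form whose only possibly nonzero components on basis vectors are
those obtained from `A(X,U_a,U_b,X) = H_{ab}` (with `H_{ab} = ∂_a∂_b f(u₀)`) via the
curvature symmetries, i.e. the multilinear extension
`A(v₁,v₂,v₃,v₄) = -∑_{a,b} H_{ab} θ_a(v₁,v₂) θ_b(v₃,v₄)` with
`θ_a(v,w) = v₀ w_a - w₀ v_a`.  Then: (a) `g` is nondegenerate; (b) `A` is an algebraic
curvature tensor; (c) `𝓐(X,U_a)U_b = H_{ab} Y`, `𝓐(X,U_a)X = -∑ Ξ^{bc} H_{ac} U_b`,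
`𝓐(X,U_a)Y = 0`; (d) the model is skew Tsankov. -/
theorem fiedler_model_skewTsankov
    (ν : ℕ) (hν : 1 ≤ ν)
    (f : (Fin ν → ℝ) → ℝ) (hf : ContDiff ℝ 2 f) (u₀ : Fin ν → ℝ)
    (H : Fin ν → Fin ν → ℝ)
    (hH : ∀ a b, H a b =
      fderiv ℝ (fun u => fderiv ℝ f u (Pi.single b 1)) u₀ (Pi.single a 1))
    (Ξ : Matrix (Fin ν) (Fin ν) ℝ) (hΞsym : Ξ.IsSymm) (hΞinv : IsUnit Ξ.det)
    (X : ℝ × (Fin ν → ℝ) × ℝ) (hX : X = (1, 0, 0))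
    (U : Fin ν → ℝ × (Fin ν → ℝ) × ℝ) (hU : ∀ a, U a = (0, Pi.single a 1, 0))
    (Y : ℝ × (Fin ν → ℝ) × ℝ) (hY : Y = (0, 0, 1))
    (g : (ℝ × (Fin ν → ℝ) × ℝ) → (ℝ × (Fin ν → ℝ) × ℝ) → ℝ)
    (hg : ∀ v w, g v w = -2 * f u₀ * v.1 * w.1 + v.1 * w.2.2 + v.2.2 * w.1 +
      ∑ a, ∑ b, Ξ a b * v.2.1 a * w.2.1 b)
    (A : (ℝ × (Fin ν → ℝ) × ℝ) → (ℝ × (Fin ν → ℝ) × ℝ) →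
         (ℝ × (Fin ν → ℝ) × ℝ) → (ℝ × (Fin ν → ℝ) × ℝ) → ℝ)
    (hA : ∀ v₁ v₂ v₃ v₄, A v₁ v₂ v₃ v₄ =
      -∑ a, ∑ b, H a b * (v₁.1 * v₂.2.1 a - v₂.1 * v₁.2.1 a) *
        (v₃.1 * v₄.2.1 b - v₄.1 * v₃.2.1 b))
    (𝓐 : (ℝ × (Fin ν → ℝ) × ℝ) → (ℝ × (Fin ν → ℝ) × ℝ) →
      ((ℝ × (Fin ν → ℝ) × ℝ) →ₗ[ℝ] (ℝ × (Fin ν → ℝ) × ℝ)))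
    (h𝓐 : ∀ ξ₁ ξ₂ z w, g (𝓐 ξ₁ ξ₂ z) w = A ξ₁ ξ₂ z w) :
    -- (a) g is nondegenerate
    (∀ v, (∀ w, g v w = 0) → v = 0) ∧
    -- (b) A is an algebraic curvature tensor
    (∀ a b c d, A a b c d = A c d a b) ∧
    (∀ a b c d, A a b c d = - A b a c d) ∧
    (∀ a b c d, A a b c d + A b c a d + A c a b d = 0) ∧
    (∀ a b, A X (U a) (U b) X = H a b) ∧
    -- (c) the curvature operators
    (∀ a b, 𝓐 X (U a) (U b) = H a b • Y) ∧
    (∀ a, 𝓐 X (U a) X = - ∑ b, ∑ c, (Ξ⁻¹ b c * H a c) • U b) ∧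
    (∀ a, 𝓐 X (U a) Y = 0) ∧
    -- (d) the model is skew Tsankov
    (∀ ξ₁ ξ₂ ξ₃ ξ₄, (𝓐 ξ₁ ξ₂) ∘ₗ (𝓐 ξ₃ ξ₄) = (𝓐 ξ₃ ξ₄) ∘ₗ (𝓐 ξ₁ ξ₂)) :=
  fiedler_model_skewTsankov_general ν f hf u₀ H hH Ξ hΞsym hΞinv X hX U hU Y hY g hg A hA 𝓐 h𝓐
end

section
/- Let ν ≥ 1, let H be a symmetric ν×ν real matrix and Ξ an invertible symmetric ν×ν real matrix with inverse entries Ξ^{ab}. On V = ℝ^{ν+2} with basis (X, U₁, …, U_ν, Y), let g be the nondegenerate symmetric bilinear form with g(X,X) = c (for any real c), g(X,Y) = 1, g(U_a,U_b) = Ξ_{ab}, g(Y,Y) = 0, g(X,U_a) = g(Y,U_a) = 0, and let A be the algebraic curvature tensor whose only possibly nonzero components on basis vectors are those obtained from A(X,U_a,U_b,X) = H_{ab} via the curvature symmetries. Then every composition of three curvature operators vanishes: 𝒜(ξ₁,ξ₂) ∘ 𝒜(ξ₃,ξ₄) ∘ 𝒜(ξ₅,ξ₆) = 0 for all ξ₁,…,ξ₆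 ∈ V; i.e., the skew-symmetric curvature operator of the Fiedler model is nilpotent of order 3. -/
/-- The skew-symmetric curvature operator of the Fiedler model is nilpotent of order 3.
On `V = ℝ^{ν+2} = ℝ × (Fin ν → ℝ) × ℝ` with basis `X = (1,0,0)`, `U_a = (0, e_a, 0)`,
`Y = (0,0,1)`, let `g` be the nondegenerate symmetric bilinear form with `g(X,X) = c`,
`g(X,Y) = 1`, `g(U_a,U_b) = Ξ_{ab}`, `g(Y,Y) = 0`, `g(X,U_a) = g(Y,U_a) = 0`, and let
`A` be the algebraic curvature tensor whose only possibly nonzero components on basis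
vectors are those obtained from `A(X,U_a,U_b,X) = H_{ab}` via the curvature
symmetries, i.e. `A(v₁,v₂,v₃,v₄) = -∑_{a,b} H_{ab} θ_a(v₁,v₂) θ_b(v₃,v₄)` with
`θ_a(v,w) = v₀ w_a - w₀ v_a`.  Then every composition of three curvature operators
vanishes: `𝓐(ξ₁,ξ₂) ∘ 𝓐(ξ₃,ξ₄) ∘ 𝓐(ξ₅,ξ₆) = 0`. -/
theorem fiedler_model_nilpotent_order_three
    (ν : ℕ) (hν : 1 ≤ ν)
    (H : Fin ν → Fin ν → ℝ) (hHsym : ∀ a b, H a b = H b a)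
    (Ξ : Matrix (Fin ν) (Fin ν) ℝ) (hΞsym : Ξ.IsSymm) (hΞinv : IsUnit Ξ.det)
    (c : ℝ)
    (X : ℝ × (Fin ν → ℝ) × ℝ) (hX : X = (1, 0, 0))
    (U : Fin ν → ℝ × (Fin ν → ℝ) × ℝ) (hU : ∀ a, U a = (0, Pi.single a 1, 0))
    (Y : ℝ × (Fin ν → ℝ) × ℝ) (hY : Y = (0, 0, 1))
    (g : (ℝ × (Fin ν → ℝ) × ℝ) → (ℝ × (Fin ν → ℝ) × ℝ) → ℝ)
    (hg : ∀ v w, g v w = c * v.1 * w.1 + v.1 * w.2.2 + v.2.2 * w.1 +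
      ∑ a, ∑ b, Ξ a b * v.2.1 a * w.2.1 b)
    (A : (ℝ × (Fin ν → ℝ) × ℝ) → (ℝ × (Fin ν → ℝ) × ℝ) →
         (ℝ × (Fin ν → ℝ) × ℝ) → (ℝ × (Fin ν → ℝ) × ℝ) → ℝ)
    (hA : ∀ v₁ v₂ v₃ v₄, A v₁ v₂ v₃ v₄ =
      -∑ a, ∑ b, H a b * (v₁.1 * v₂.2.1 a - v₂.1 * v₁.2.1 a) *
        (v₃.1 * v₄.2.1 b - v₄.1 * v₃.2.1 b))
    (𝓐 : (ℝ × (Fin ν → ℝ) × ℝ) → (ℝ × (Fin ν → ℝ) × ℝ) →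
      ((ℝ × (Fin ν → ℝ) × ℝ) →ₗ[ℝ] (ℝ × (Fin ν → ℝ) × ℝ)))
    (h𝓐 : ∀ ξ₁ ξ₂ z w, g (𝓐 ξ₁ ξ₂ z) w = A ξ₁ ξ₂ z w) :
    ∀ ξ₁ ξ₂ ξ₃ ξ₄ ξ₅ ξ₆, (𝓐 ξ₁ ξ₂) ∘ₗ (𝓐 ξ₃ ξ₄) ∘ₗ (𝓐 ξ₅ ξ₆) = 0 := by
  -- Key fact 1: the first (X) component of any 𝓐-image vanishes.
  have key1 : ∀ p q v, (𝓐 p q v).1 = 0 := by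
    intro p q v
    have h := h𝓐 p q v Y
    rw [hg, hA, hY] at h
    simpa using h
  -- Key fact 2: if the first component of `v` vanishes, the middle component
  -- of `𝓐 p q v` vanishes.
  have key2 : ∀ p q v, v.1 = 0 → (𝓐 p q v).2.1 = 0 := by
    intro p q v hv
    set m := 𝓐 p q v with hm
    have hvm : Matrix.vecMul m.2.1 Ξ = 0 := by
      funext b'
      have h := h𝓐 p q v (U b')
      rw [hg, hA, hU b', hv] at h
      simp only [Pi.single_apply, mul_ite, mul_one, mul_zero, zero_mul, mul_zero,
        sub_zero, zero_sub, Finset.sum_ite_eq, Finset.sum_ite_eq',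
        Finset.mem_univ, if_true] at h
      have : ∑ a, Ξ a b' * m.2.1 a = 0 := by
        simpa using h
      rw [Matrix.vecMul, Pi.zero_apply]
      rw [show (dotProduct m.2.1 fun a => Ξ a b') = ∑ a, Ξ a b' * m.2.1 a from
        by simp [dotProduct, mul_comm]]
      exact this
    have hinv := Matrix.mul_nonsing_inv Ξ hΞinv
    calc m.2.1 = Matrix.vecMul m.2.1 1 := (Matrix.vecMul_one m.2.1).symm
      _ = Matrix.vecMul m.2.1 (Ξ * Ξ⁻¹) := by rw [hinv]
      _ = Matrix.vecMul (Matrix.vecMul m.2.1 Ξ) Ξ⁻¹ := by rw [Matrix.vecMul_vecMul]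
      _ = 0 := by rw [hvm]; simp [Matrix.zero_vecMul]
  -- Key fact 3: if both the first and middle components of `v` vanish,
  -- then `𝓐 p q v = 0`.
  have key3 : ∀ p q v, v.1 = 0 → v.2.1 = 0 → 𝓐 p q v = 0 := by
    intro p q v hv1 hv2
    have h1 : (𝓐 p q v).1 = 0 := key1 p q v
    have h2 : (𝓐 p q v).2.1 = 0 := key2 p q v hv1
    have h3 : (𝓐 p q v).2.2 = 0 := by
      have h := h𝓐 p q v X
      rw [hg, hA, hX, hv1, h1] at h
      simpa [hv2] using h
    have : 𝓐 p q v = ((𝓐 p q v).1, (𝓐 p q v).2.1, (𝓐 p q v).2.2) := rfl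
    rw [this, h1, h2, h3]
    rfl
  intro ξ₁ ξ₂ ξ₃ ξ₄ ξ₅ ξ₆
  apply LinearMap.ext; intro z
  simp only [LinearMap.comp_apply, LinearMap.zero_apply]
  exact key3 ξ₁ ξ₂ _ (key1 ξ₃ ξ₄ _) (key2 ξ₃ ξ₄ _ (key1 ξ₅ ξ₆ z))
end

section
/- Let β > 0 and define h(x₃,x₄) := ln 2 - ln x₃ - ln(x₃ + βx₄) on the open set O = {(x₃,x₄) ∈ ℝ² : x₃ > 0, x₄ > 0} (so that h = ln|τ| for the scalar curvature τ(x₃,x₄) = -2 x₃^{-1}(x₃+βx₄)^{-1}). Then on O the second partial derivatives of h satisfy ∂²h/∂x₃² = x₃^{-2} + (x₃+βx₄)^{-2}, ∂²h/∂x₃∂x₄ = β(x₃+βx₄)^{-2}, ∂²h/∂x₄² = β²(x₃+βx₄)^{-2}, and the determinant of the Hessian matrix of h equals β² x₃^{-2}(x₃+βx₄)^{-2}; in particular, this determinant determines β, so that manifolds M_{β₁} and M_{β₂} with β₁ ≠ β₂ are not isometric. -/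
/-!
Away from `a = 0` and `a + β b = 0` the first partials of `h` are the explicit functions
`-a⁻¹ - (a + β b)⁻¹` and `-β (a + β b)⁻¹`, and these formulas persist on a neighbourhood, so the
second partials are the derivatives of these closed forms. At `(a, b) = (1, 1)` the Hessian
determinant is `(β / (1 + β))²`, and `t ↦ t / (1 + t)` is injective on `t ≥ 0`.
-/

open Real Filter Topology

noncomputable def logAbsScalarCurvature (β a b : ℝ) : ℝ :=
  log 2 - log a - log (a + β * b)

namespace logAbsScalarCurvature

variable {β a b : ℝ}

theorem hasDerivAt_fst (ha : a ≠ 0) (hab : a + β * b ≠ 0) :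
    HasDerivAt (logAbsScalarCurvature β · b) (-a⁻¹ - (a + β * b)⁻¹) a := by
  have := ((hasDerivAt_const a (log 2)).sub (hasDerivAt_log ha)).sub
    (((hasDerivAt_id a).add_const (β * b)).log hab)
  exact this.congr_deriv (by simp only [id, one_div, zero_sub])

theorem hasDerivAt_snd (hab : a + β * b ≠ 0) :
    HasDerivAt (logAbsScalarCurvature β a ·) (-(β * (a + β * b)⁻¹)) b := by
  have := (hasDerivAt_const b (log 2 - log a)).sub
    ((((hasDerivAt_id b).const_mul β).const_add a).log hab)
  exact this.congr_deriv (by simp only [id, mul_one, zero_sub, div_eq_mul_inv])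

theorem deriv_fst_fst (ha : a ≠ 0) (hab : a + β * b ≠ 0) :
    deriv (fun a' => deriv (logAbsScalarCurvature β · b) a') a =
      a⁻¹ ^ 2 + (a + β * b)⁻¹ ^ 2 := by
  have hfst : (fun a' => deriv (logAbsScalarCurvature β · b) a') =ᶠ[𝓝 a]
      fun a' => -a'⁻¹ - (a' + β * b)⁻¹ := by
    filter_upwards [eventually_ne_nhds ha,
      (by fun_prop : ContinuousAt (· + β * b) a).eventually_ne hab] with a' ha' hab'
    exact (hasDerivAt_fst ha' hab').deriv
  have := (hasDerivAt_inv ha).neg.sub (((hasDerivAt_id a).add_const (β * b)).fun_inv hab)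
  rw [(this.congr_of_eventuallyEq hfst).deriv]
  simp only [id, div_eq_mul_inv, inv_pow]
  ring

theorem deriv_snd_fst (ha : a ≠ 0) (hab : a + β * b ≠ 0) :
    deriv (fun b' => deriv (logAbsScalarCurvature β · b') a) b = β * (a + β * b)⁻¹ ^ 2 := by
  have hfst : (fun b' => deriv (logAbsScalarCurvature β · b') a) =ᶠ[𝓝 b]
      fun b' => -a⁻¹ - (a + β * b')⁻¹ := by
    filter_upwards [(by fun_prop : ContinuousAt (a + β * ·) b).eventually_ne hab] with b' hab'
    exact (hasDerivAt_fst ha hab').deriv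
  have := (hasDerivAt_const b (-a⁻¹)).sub
    ((((hasDerivAt_id b).const_mul β).const_add a).fun_inv hab)
  rw [(this.congr_of_eventuallyEq hfst).deriv]
  simp only [id, div_eq_mul_inv, inv_pow]
  ring

theorem deriv_fst_snd (hab : a + β * b ≠ 0) :
    deriv (fun a' => deriv (logAbsScalarCurvature β a' ·) b) a = β * (a + β * b)⁻¹ ^ 2 := by
  have hsnd : (fun a' => deriv (logAbsScalarCurvature β a' ·) b) =ᶠ[𝓝 a]
      fun a' => -(β * (a' + β * b)⁻¹) := by
    filter_upwards [(by fun_prop : ContinuousAt (· + β * b) a).eventually_ne hab] with a' hab'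
    exact (hasDerivAt_snd hab').deriv
  have := ((((hasDerivAt_id a).add_const (β * b)).fun_inv hab).const_mul β).neg
  rw [(this.congr_of_eventuallyEq hsnd).deriv]
  simp only [id, div_eq_mul_inv, inv_pow]
  ring

theorem deriv_snd_snd (hab : a + β * b ≠ 0) :
    deriv (fun b' => deriv (logAbsScalarCurvature β a ·) b') b = β ^ 2 * (a + β * b)⁻¹ ^ 2 := by
  have hsnd : (fun b' => deriv (logAbsScalarCurvature β a ·) b') =ᶠ[𝓝 b]
      fun b' => -(β * (a + β * b')⁻¹) := by
    filter_upwards [(by fun_prop : ContinuousAt (a + β * ·) b).eventually_ne hab] with b' hab'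
    exact (hasDerivAt_snd hab').deriv
  have := (((((hasDerivAt_id b).const_mul β).const_add a).fun_inv hab).const_mul β).neg
  rw [(this.congr_of_eventuallyEq hsnd).deriv]
  simp only [id, div_eq_mul_inv, inv_pow]
  ring

end logAbsScalarCurvature

theorem eq_of_sq_mul_inv_one_add_sq_eq {β β' : ℝ} (hβ : 0 ≤ β) (hβ' : 0 ≤ β')
    (h : β ^ 2 * (1 + β)⁻¹ ^ 2 = β' ^ 2 * (1 + β')⁻¹ ^ 2) : β = β' := by
  rw [← mul_pow, ← mul_pow] at h
  have h := (pow_left_inj₀ (by positivity) (by positivity) two_ne_zero).mp h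
  field_simp at h
  linarith

open logAbsScalarCurvature

/-- For `β > 0` let `h(x₃,x₄) = ln 2 - ln x₃ - ln (x₃ + β x₄)` on
`O = {x₃ > 0, x₄ > 0}` (so `h = ln |τ|` for the scalar curvature
`τ = -2 x₃⁻¹ (x₃ + β x₄)⁻¹` of the manifold `M_β`).  Then on `O` one has
`∂²h/∂x₃² = x₃⁻² + (x₃+βx₄)⁻²`, `∂²h/∂x₃∂x₄ = β (x₃+βx₄)⁻²`,
`∂²h/∂x₄² = β² (x₃+βx₄)⁻²`, and the determinant of the Hessian of `h` equals
`β² x₃⁻² (x₃+βx₄)⁻²`; in particular this determinant determines `β` (so the manifolds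
`M_{β₁}` and `M_{β₂}` are not isometric for `β₁ ≠ β₂`). -/
theorem hessian_log_scalar_curvature
    (β : ℝ) (hβ : 0 < β)
    (h : ℝ → ℝ → ℝ)
    (hh : ∀ a b : ℝ, h a b = Real.log 2 - Real.log a - Real.log (a + β * b)) :
    (∀ a b : ℝ, 0 < a → 0 < b →
      deriv (fun a' => deriv (fun a'' => h a'' b) a') a =
        a⁻¹ ^ 2 + (a + β * b)⁻¹ ^ 2) ∧
    (∀ a b : ℝ, 0 < a → 0 < b →
      deriv (fun b' => deriv (fun a' => h a' b') a) b = β * (a + β * b)⁻¹ ^ 2) ∧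
    (∀ a b : ℝ, 0 < a → 0 < b →
      deriv (fun b' => deriv (fun b'' => h a b'') b') b = β ^ 2 * (a + β * b)⁻¹ ^ 2) ∧
    (∀ a b : ℝ, 0 < a → 0 < b →
      (deriv (fun a' => deriv (fun a'' => h a'' b) a') a) *
          (deriv (fun b' => deriv (fun b'' => h a b'') b') b) -
        (deriv (fun b' => deriv (fun a' => h a' b') a) b) *
          (deriv (fun a' => deriv (fun b' => h a' b') b) a) =
        β ^ 2 * a⁻¹ ^ 2 * (a + β * b)⁻¹ ^ 2) ∧
    (∀ β' : ℝ, 0 < β' →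
      (∀ a b : ℝ, 0 < a → 0 < b →
        β ^ 2 * a⁻¹ ^ 2 * (a + β * b)⁻¹ ^ 2 =
          β' ^ 2 * a⁻¹ ^ 2 * (a + β' * b)⁻¹ ^ 2) →
      β = β') := by
  obtain rfl : h = logAbsScalarCurvature β := funext₂ hh
  have hab : ∀ a b : ℝ, 0 < a → 0 < b → a + β * b ≠ 0 := fun a b ha hb => by positivity
  refine ⟨fun a b ha hb => deriv_fst_fst ha.ne' (hab a b ha hb),
    fun a b ha hb => deriv_snd_fst ha.ne' (hab a b ha hb),
    fun a b ha hb => deriv_snd_snd (hab a b ha hb), fun a b ha hb => ?_, fun β' hβ' hdet => ?_⟩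
  · rw [deriv_fst_fst ha.ne' (hab a b ha hb), deriv_snd_snd (hab a b ha hb),
      deriv_snd_fst ha.ne' (hab a b ha hb), deriv_fst_snd (hab a b ha hb)]
    ring
  · refine eq_of_sq_mul_inv_one_add_sq_eq hβ.le hβ'.le ?_
    simpa only [inv_one, one_pow, mul_one] using hdet 1 1 one_pos one_pos
end

section
/- Fix ε ∈ {1,-1}. Then every maximal solution γ(t) = (x(t), x̃(t), y(t)) of the system of ordinary differential equations x'' = 0, x̃'' = 2ε y x' y', y'' = -ε y (x')² is defined on all of ℝ. (These are the geodesic equations of the Lorentzian manifold S_ε, so S_+ and S_- are geodesically complete.) -/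
/-!
The equation `x'' = 0` makes `x' ≡ b` constant, after which `y'' = -ε b² y` is a linear equation
with constant coefficients; its solutions are combinations of a cosine-like and a sine-like
function defined on all of `ℝ`, and a Wronskian argument shows that every local solution is the
restriction of one of them. Finally `x̃'` and `x̃` are recovered by integrating right-hand sides
that are now globally defined and continuous.
-/

open Set

section Antiderivative

variable {E : Type*} [NormedAddCommGroup E] [NormedSpace ℝ E] {s : Set ℝ}

theorem Set.OrdConnected.eq_of_hasDerivAt_zero (hs : s.OrdConnected) {f : ℝ → E}
    (hf : ∀ t ∈ s, HasDerivAt f 0 t) {a b : ℝ} (ha : a ∈ s) (hb : b ∈ s) : f a = f b := by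
  wlog hab : a ≤ b generalizing a b
  · exact (this hb ha (le_of_not_ge hab)).symm
  have hsub : Icc a b ⊆ s := hs.out ha hb
  exact (constant_of_has_deriv_right_zero (HasDerivAt.continuousOn fun t ht => hf t (hsub ht))
    (fun t ht => (hf t (hsub (Ico_subset_Icc_self ht))).hasDerivWithinAt) b ⟨hab, le_rfl⟩).symm

theorem Set.OrdConnected.exists_eq_const_of_hasDerivAt_zero (hs : s.OrdConnected) {f : ℝ → E}
    (hf : ∀ t ∈ s, HasDerivAt f 0 t) : ∃ c, ∀ t ∈ s, f t = c := by
  obtain rfl | ⟨t₀, ht₀⟩ := s.eq_empty_or_nonempty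
  · exact ⟨0, fun t ht => ht.elim⟩
  · exact ⟨f t₀, fun t ht => hs.eq_of_hasDerivAt_zero hf ht ht₀⟩

theorem Set.OrdConnected.exists_hasDerivAt_eqOn [CompleteSpace E] (hs : s.OrdConnected)
    {f f' g : ℝ → E} (hf : ∀ t ∈ s, HasDerivAt f (f' t) t) (hg : Continuous g)
    (hfg : EqOn f' g s) : ∃ F : ℝ → E, (∀ t, HasDerivAt F (g t) t) ∧ EqOn F f s := by
  obtain rfl | ⟨t₀, ht₀⟩ := s.eq_empty_or_nonempty
  · exact ⟨fun t => ∫ τ in 0..t, g τ,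
      fun t => (hg.integral_hasStrictDerivAt 0 t).hasDerivAt, eqOn_empty _ _⟩
  set F : ℝ → E := fun t => f t₀ + ∫ τ in t₀..t, g τ
  have hF : ∀ t, HasDerivAt F (g t) t := fun t =>
    (hg.integral_hasStrictDerivAt t₀ t).hasDerivAt.const_add _
  refine ⟨F, hF, fun t ht => ?_⟩
  have hconst := hs.eq_of_hasDerivAt_zero (f := fun t => F t - f t)
    (fun τ hτ => ((hF τ).sub (hf τ hτ)).congr_deriv (by rw [hfg hτ, sub_self])) ht ht₀
  simpa [F, sub_eq_zero] using hconst

end Antiderivative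

def SolvesLinearODE (q : ℝ → ℝ) (s : Set ℝ) (u u' : ℝ → ℝ) : Prop :=
  ∀ t ∈ s, HasDerivAt u (u' t) t ∧ HasDerivAt u' (q t * u t) t

namespace SolvesLinearODE

variable {q : ℝ → ℝ} {s : Set ℝ} {u u' v v' : ℝ → ℝ}

theorem wronskian_eq (hs : s.OrdConnected) (hu : SolvesLinearODE q s u u')
    (hv : SolvesLinearODE q s v v') {a b : ℝ} (ha : a ∈ s) (hb : b ∈ s) :
    u a * v' a - u' a * v a = u b * v' b - u' b * v b :=
  hs.eq_of_hasDerivAt_zero (f := fun t => u t * v' t - u' t * v t) (fun t ht =>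
    (((hu t ht).1.mul (hv t ht).2).sub ((hu t ht).2.mul (hv t ht).1)).congr_deriv (by ring))
    ha hb

end SolvesLinearODE

/-- The witnesses are `cos (ω t)`, `sin (ω t) / ω` if `k = -ω² < 0`, `1`, `t` if `k = 0`, and
`cosh (ω t)`, `sinh (ω t) / ω` if `k = ω² > 0`, shifted by `t₀`. -/
theorem exists_cos_sin_like (k t₀ : ℝ) :
    ∃ C S : ℝ → ℝ, C t₀ = 1 ∧ S t₀ = 0 ∧
      ∀ t, HasDerivAt C (k * S t) t ∧ HasDerivAt S (C t) t := by
  suffices ∃ C S : ℝ → ℝ, C 0 = 1 ∧ S 0 = 0 ∧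
      ∀ t, HasDerivAt C (k * S t) t ∧ HasDerivAt S (C t) t by
    obtain ⟨C, S, hC, hS, hderiv⟩ := this
    exact ⟨fun t => C (t - t₀), fun t => S (t - t₀), by simpa using hC, by simpa using hS,
      fun t => ⟨(hderiv (t - t₀)).1.comp_sub_const t t₀, (hderiv (t - t₀)).2.comp_sub_const t t₀⟩⟩
  have hlin (ω t : ℝ) : HasDerivAt (fun t => ω * t) ω t := by
    simpa using (hasDerivAt_id t).const_mul ω
  rcases lt_trichotomy k 0 with hk | rfl | hk
  · obtain ⟨ω, hω, rfl⟩ : ∃ ω : ℝ, 0 < ω ∧ k = -ω ^ 2 :=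
      ⟨√(-k), Real.sqrt_pos.2 (neg_pos.2 hk), by rw [Real.sq_sqrt (by linarith)]; ring⟩
    refine ⟨fun t => Real.cos (ω * t), fun t => Real.sin (ω * t) / ω, by simp, by simp,
      fun t => ⟨((hlin ω t).cos).congr_deriv ?_, ((hlin ω t).sin.div_const ω).congr_deriv ?_⟩⟩
    all_goals field_simp
  · exact ⟨fun _ => 1, id, rfl, rfl, fun t => ⟨by simpa using hasDerivAt_const t (1 : ℝ),
      hasDerivAt_id t⟩⟩
  · obtain ⟨ω, hω, rfl⟩ : ∃ ω : ℝ, 0 < ω ∧ k = ω ^ 2 :=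
      ⟨√k, Real.sqrt_pos.2 hk, (Real.sq_sqrt hk.le).symm⟩
    refine ⟨fun t => Real.cosh (ω * t), fun t => Real.sinh (ω * t) / ω, by simp, by simp,
      fun t => ⟨((hlin ω t).cosh).congr_deriv ?_, ((hlin ω t).sinh.div_const ω).congr_deriv ?_⟩⟩
    all_goals field_simp

theorem SolvesLinearODE.exists_extension {k : ℝ} {s : Set ℝ} (hs : s.OrdConnected)
    {y y' : ℝ → ℝ} (hy : SolvesLinearODE (fun _ => k) s y y') :
    ∃ Y Y' : ℝ → ℝ, SolvesLinearODE (fun _ => k) univ Y Y' ∧ EqOn Y y s ∧ EqOn Y' y' s := by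
  obtain rfl | ⟨t₀, ht₀⟩ := s.eq_empty_or_nonempty
  · exact ⟨0, 0, fun t _ => ⟨hasDerivAt_const t 0, (hasDerivAt_const t 0).congr_deriv (by simp)⟩,
      eqOn_empty _ _, eqOn_empty _ _⟩
  obtain ⟨C, S, hC₀, hS₀, hCS⟩ := exists_cos_sin_like k t₀
  have hC : SolvesLinearODE (fun _ => k) s C (fun t => k * S t) := fun t _ =>
    ⟨(hCS t).1, (hCS t).2.const_mul k⟩
  have hS : SolvesLinearODE (fun _ => k) s S C := fun t _ => ⟨(hCS t).2, (hCS t).1⟩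
  have hwCS : ∀ t ∈ s, C t * C t - k * S t * S t = 1 := fun t ht => by
    simpa [hC₀, hS₀] using hC.wronskian_eq hs hS ht ht₀
  have hwyS : ∀ t ∈ s, y t * C t - y' t * S t = y t₀ := fun t ht => by
    simpa [hC₀, hS₀] using hy.wronskian_eq hs hS ht ht₀
  have hwCy : ∀ t ∈ s, C t * y' t - k * S t * y t = y' t₀ := fun t ht => by
    simpa [hC₀, hS₀] using hC.wronskian_eq hs hy ht ht₀
  -- As `W(C, S) = 1`, the constant Wronskians `W(y, S)`, `W(C, y)` are the coordinates of `y`.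
  refine ⟨fun t => y t₀ * C t + y' t₀ * S t, fun t => y t₀ * (k * S t) + y' t₀ * C t,
    fun t _ => ⟨((hCS t).1.const_mul _).add ((hCS t).2.const_mul _),
      (((hCS t).2.const_mul k |>.const_mul _).add ((hCS t).1.const_mul _)).congr_deriv
        (by ring)⟩, fun t ht => ?_, fun t ht => ?_⟩
  · linear_combination (-C t) * hwyS t ht - S t * hwCy t ht + y t * hwCS t ht
  · linear_combination (-k * S t) * hwyS t ht - C t * hwCy t ht + y' t * hwCS t ht

theorem S_eps_geodesically_complete_general
    (ε : ℝ)
    (I : Set ℝ) (hIconn : I.OrdConnected)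
    (x xt y x' xt' y' : ℝ → ℝ)
    (hx : ∀ t ∈ I, HasDerivAt x (x' t) t)
    (hx' : ∀ t ∈ I, HasDerivAt x' 0 t)
    (hxt : ∀ t ∈ I, HasDerivAt xt (xt' t) t)
    (hxt' : ∀ t ∈ I, HasDerivAt xt' (2 * ε * y t * x' t * y' t) t)
    (hy : ∀ t ∈ I, HasDerivAt y (y' t) t)
    (hy' : ∀ t ∈ I, HasDerivAt y' (-(ε * y t * (x' t) ^ 2)) t) :
    ∃ X XT Yg X' XT' Y' : ℝ → ℝ,
      (∀ t, HasDerivAt X (X' t) t) ∧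
      (∀ t, HasDerivAt X' 0 t) ∧
      (∀ t, HasDerivAt XT (XT' t) t) ∧
      (∀ t, HasDerivAt XT' (2 * ε * Yg t * X' t * Y' t) t) ∧
      (∀ t, HasDerivAt Yg (Y' t) t) ∧
      (∀ t, HasDerivAt Y' (-(ε * Yg t * (X' t) ^ 2)) t) ∧
      (∀ t ∈ I, X t = x t ∧ XT t = xt t ∧ Yg t = y t) := by
  obtain ⟨b, hb⟩ := hIconn.exists_eq_const_of_hasDerivAt_zero hx'
  have hy_lin : SolvesLinearODE (fun _ => -(ε * b ^ 2)) I y y' := fun t ht =>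
    ⟨hy t ht, (hy' t ht).congr_deriv (by rw [hb t ht]; ring)⟩
  obtain ⟨Y, Y', hY, hYy, hY'y'⟩ := hy_lin.exists_extension hIconn
  have hY_cont : Continuous Y :=
    Differentiable.continuous fun t => (hY t trivial).1.differentiableAt
  have hY'_cont : Continuous Y' :=
    Differentiable.continuous fun t => (hY t trivial).2.differentiableAt
  obtain ⟨X, hX, hXx⟩ := hIconn.exists_hasDerivAt_eqOn hx continuous_const fun t ht => hb t ht
  obtain ⟨XT', hXT', hXT'xt'⟩ := hIconn.exists_hasDerivAt_eqOn hxt'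
    (g := fun t => 2 * ε * Y t * b * Y' t) (by fun_prop)
    fun t ht => by simp only [hb t ht, hYy ht, hY'y' ht]
  obtain ⟨XT, hXT, hXTxt⟩ := hIconn.exists_hasDerivAt_eqOn hxt
    (Differentiable.continuous fun t => (hXT' t).differentiableAt) fun t ht => (hXT'xt' ht).symm
  exact ⟨X, XT, Y, fun _ => b, XT', Y', hX, fun t => hasDerivAt_const t b, hXT, hXT',
    fun t => (hY t trivial).1, fun t => (hY t trivial).2.congr_deriv (by ring),
    fun t ht => ⟨hXx ht, hXTxt ht, hYy ht⟩⟩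

/-- Geodesic completeness of the manifolds `S_ε` (`ε = ±1`): every maximal solution of
the geodesic system `x'' = 0`, `x̃'' = 2ε y x' y'`, `y'' = -ε y (x')²` is defined on
all of `ℝ`.  Equivalently, every solution defined on an open interval `I` extends to a
solution defined on all of `ℝ`. -/
theorem S_eps_geodesically_complete
    (ε : ℝ) (hε : ε = 1 ∨ ε = -1)
    (I : Set ℝ) (hIopen : IsOpen I) (hIconn : I.OrdConnected)
    (x xt y x' xt' y' : ℝ → ℝ)
    (hx : ∀ t ∈ I, HasDerivAt x (x' t) t)
    (hx' : ∀ t ∈ I, HasDerivAt x' 0 t)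
    (hxt : ∀ t ∈ I, HasDerivAt xt (xt' t) t)
    (hxt' : ∀ t ∈ I, HasDerivAt xt' (2 * ε * y t * x' t * y' t) t)
    (hy : ∀ t ∈ I, HasDerivAt y (y' t) t)
    (hy' : ∀ t ∈ I, HasDerivAt y' (-(ε * y t * (x' t) ^ 2)) t) :
    ∃ X XT Yg X' XT' Y' : ℝ → ℝ,
      (∀ t, HasDerivAt X (X' t) t) ∧
      (∀ t, HasDerivAt X' 0 t) ∧
      (∀ t, HasDerivAt XT (XT' t) t) ∧
      (∀ t, HasDerivAt XT' (2 * ε * Yg t * X' t * Y' t) t) ∧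
      (∀ t, HasDerivAt Yg (Y' t) t) ∧
      (∀ t, HasDerivAt Y' (-(ε * Yg t * (X' t) ^ 2)) t) ∧
      (∀ t ∈ I, X t = x t ∧ XT t = xt t ∧ Yg t = y t) :=
  S_eps_geodesically_complete_general ε I hIconn x xt y x' xt' y' hx hx' hxt hxt' hy hy'
end

section
/- Let f(y) = -½y² (the case ε = -1, i.e. the manifold S_-). For P ∈ ℝ³ and v ∈ ℝ³, let γ_{P,v} : ℝ → ℝ³ be the unique solution of the geodesic system x'' = 0, x̃'' = -2 y x' y', y'' = y (x')² with γ_{P,v}(0) = P and γ_{P,v}'(0) = v (this solution is defined on all of ℝ). Then for every P ∈ ℝ³ the exponential map E_P : ℝ³ → ℝ³ given by E_P(v) := γ_{P,v}(1) is a bijection from ℝ³ onto ℝ³. -/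
/-!
Along a geodesic `x'` is constant, say `a`, so `x(1) = x(0) + a`, and `y'' = a² y` forces
`y(t) = y(0) cosh (a t) + y'(0) sinh (a t) / a`. The quantity `x̃' + a y²` is conserved, so
`x̃'` is `x̃'(0)` plus a function of `a` and `y`; hence `x̃(1) - x̃'(0)` depends only on
`(a, y'(0))`. In the coordinates `v = (a, x̃'(0), y'(0))` the exponential map is therefore
triangular: `a` is read off the first coordinate, `y'(0)` off the third since
`sinh a / a > 0`, and then `x̃'(0)` off the second.
-/

open Real Set Function

/-- `sinh (a t) / a`, continued by its limit `t` at `a = 0`. -/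
noncomputable def sinhDiv (a t : ℝ) : ℝ := if a = 0 then t else sinh (a * t) / a

@[simp]
lemma sinhDiv_zero_right (a : ℝ) : sinhDiv a 0 = 0 := by
  simp [sinhDiv]

lemma mul_sinh_mul_eq_sq_mul_sinhDiv (a t : ℝ) : a * sinh (a * t) = a ^ 2 * sinhDiv a t := by
  rcases eq_or_ne a 0 with rfl | ha
  · simp
  · rw [sinhDiv, if_neg ha]
    field_simp

lemma sinhDiv_pos (a : ℝ) {t : ℝ} (ht : 0 < t) : 0 < sinhDiv a t := by
  rcases lt_trichotomy a 0 with ha | rfl | ha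
  · rw [sinhDiv, if_neg ha.ne]
    exact div_pos_of_neg_of_neg (sinh_neg_iff.2 (mul_neg_of_neg_of_pos ha ht)) ha
  · simpa [sinhDiv] using ht
  · rw [sinhDiv, if_neg ha.ne']
    exact div_pos (sinh_pos_iff.2 (mul_pos ha ht)) ha

lemma hasDerivAt_sinh_mul (a t : ℝ) :
    HasDerivAt (fun t => sinh (a * t)) (a * cosh (a * t)) t := by
  simpa [mul_comm] using ((hasDerivAt_id t).const_mul a).sinh

lemma hasDerivAt_cosh_mul (a t : ℝ) :
    HasDerivAt (fun t => cosh (a * t)) (a ^ 2 * sinhDiv a t) t := by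
  rw [← mul_sinh_mul_eq_sq_mul_sinhDiv]
  simpa [mul_comm] using ((hasDerivAt_id t).const_mul a).cosh

lemma hasDerivAt_sinhDiv (a t : ℝ) : HasDerivAt (sinhDiv a) (cosh (a * t)) t := by
  rcases eq_or_ne a 0 with rfl | ha
  · have h : sinhDiv 0 = id := funext fun t => if_pos rfl
    simpa [h] using hasDerivAt_id t
  · have h : sinhDiv a = fun t => sinh (a * t) / a := funext fun t => if_neg ha
    rw [h]
    exact ((hasDerivAt_sinh_mul a t).div_const a).congr_deriv (by field_simp)

theorem eq_of_hasDerivAt_clm_apply {E : Type*} [NormedAddCommGroup E] [NormedSpace ℝ E]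
    (L : E →L[ℝ] E) {f g : ℝ → E} {t₀ : ℝ} (hf : ∀ t, HasDerivAt f (L (f t)) t)
    (hg : ∀ t, HasDerivAt g (L (g t)) t) (h₀ : f t₀ = g t₀) : f = g :=
  ODE_solution_unique_univ (v := fun _ => L) (s := fun _ => univ)
    (fun _ => L.lipschitz.lipschitzOnWith) (fun t => ⟨hf t, trivial⟩)
    (fun t => ⟨hg t, trivial⟩) h₀

theorem eq_cosh_add_sinhDiv_of_hasDerivAt {a : ℝ} {y y' : ℝ → ℝ}
    (hy : ∀ t, HasDerivAt y (y' t) t) (hy' : ∀ t, HasDerivAt y' (a ^ 2 * y t) t) (t : ℝ) :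
    y t = y 0 * cosh (a * t) + y' 0 * sinhDiv a t := by
  let L : ℝ × ℝ →L[ℝ] ℝ × ℝ :=
    (ContinuousLinearMap.snd ℝ ℝ ℝ).prod (a ^ 2 • ContinuousLinearMap.fst ℝ ℝ ℝ)
  have hL : ∀ p : ℝ × ℝ, L p = (p.2, a ^ 2 * p.1) := fun _ => rfl
  have hsol : ∀ t, HasDerivAt (fun t => (y t, y' t)) (L (y t, y' t)) t :=
    fun t => (hy t).prodMk (hy' t)
  have hexplicit : ∀ t, HasDerivAt
      (fun t => (y 0 * cosh (a * t) + y' 0 * sinhDiv a t,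
        y 0 * (a ^ 2 * sinhDiv a t) + y' 0 * cosh (a * t)))
      (L (y 0 * cosh (a * t) + y' 0 * sinhDiv a t,
        y 0 * (a ^ 2 * sinhDiv a t) + y' 0 * cosh (a * t))) t := by
    intro t
    rw [hL]
    refine (((hasDerivAt_cosh_mul a t).const_mul _).add
      ((hasDerivAt_sinhDiv a t).const_mul _)).prodMk
      ((((hasDerivAt_sinhDiv a t).const_mul _).const_mul _).add
        ((hasDerivAt_cosh_mul a t).const_mul _)) |>.congr_deriv ?_
    exact Prod.ext rfl (by ring)
  have h := eq_of_hasDerivAt_clm_apply L hsol hexplicit (t₀ := 0) (by simp)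
  exact congrArg Prod.fst (congrFun h t)

lemma eq_of_hasDerivAt_zero {E : Type*} [NormedAddCommGroup E] [NormedSpace ℝ E] {f : ℝ → E}
    (hf : ∀ t, HasDerivAt f 0 t) (t : ℝ) : f t = f 0 :=
  is_const_of_deriv_eq_zero (fun t => (hf t).differentiableAt) (fun t => (hf t).deriv) t 0

lemma eq_add_mul_of_hasDerivAt {f : ℝ → ℝ} {c : ℝ} (hf : ∀ t, HasDerivAt f c t) (t : ℝ) :
    f t = f 0 + c * t := by
  have h : ∀ t, HasDerivAt (fun t => f t - c * t) 0 t := fun t =>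
    ((hf t).sub ((hasDerivAt_id t).const_mul c)).congr_deriv (by simp)
  have := eq_of_hasDerivAt_zero h t
  simp only [mul_zero, sub_zero] at this
  linarith

lemma eq_add_mul_of_hasDerivAt_eq_add {f g f' g' : ℝ → ℝ} {c : ℝ}
    (hf : ∀ t, HasDerivAt f (f' t) t) (hg : ∀ t, HasDerivAt g (g' t) t)
    (hfg : ∀ t, f' t = g' t + c) (t : ℝ) : f t = g t + (f 0 - g 0) + c * t := by
  have := eq_add_mul_of_hasDerivAt (f := fun t => f t - g t) (c := c)
    (fun t => ((hf t).sub (hg t)).congr_deriv (by simp [hfg])) t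
  linarith

theorem bijective_of_triangular {K : Type*} [Field K] (p : K) (g : K → K → K) (c s : K → K)
    (hs : ∀ a, s a ≠ 0) :
    Bijective fun v : K × K × K => (p + v.1, g v.1 v.2.2 + v.2.1, c v.1 + v.2.2 * s v.1) := by
  refine ⟨?_, ?_⟩
  · rintro ⟨a, b, d⟩ ⟨a', b', d'⟩ h
    simp only [Prod.mk.injEq, add_right_inj] at h
    obtain ⟨rfl, hb, hd⟩ := h
    obtain rfl : d = d' := mul_right_cancel₀ (hs a) (add_left_cancel hd)
    simp_all
  · rintro ⟨q₁, q₂, q₃⟩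
    obtain ⟨d, hd⟩ : ∃ d, c (q₁ - p) + d * s (q₁ - p) = q₃ :=
      ⟨(q₃ - c (q₁ - p)) / s (q₁ - p), by rw [div_mul_cancel₀ _ (hs _)]; ring⟩
    exact ⟨(q₁ - p, q₂ - g (q₁ - p) d, d), by simp [hd]⟩

section Geodesic

variable {x' xt' y y' : ℝ → ℝ}

lemma geodesic_y_eq (hx' : ∀ t, HasDerivAt x' 0 t) (hy : ∀ t, HasDerivAt y (y' t) t)
    (hy' : ∀ t, HasDerivAt y' (y t * x' t ^ 2) t) (t : ℝ) :
    y t = y 0 * cosh (x' 0 * t) + y' 0 * sinhDiv (x' 0) t :=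
  eq_cosh_add_sinhDiv_of_hasDerivAt hy
    (fun t => (hy' t).congr_deriv (by rw [eq_of_hasDerivAt_zero hx' t, mul_comm])) t

lemma geodesic_xt'_eq (hx' : ∀ t, HasDerivAt x' 0 t)
    (hxt' : ∀ t, HasDerivAt xt' (-(2 * y t * x' t * y' t)) t) (hy : ∀ t, HasDerivAt y (y' t) t)
    (t : ℝ) : xt' t = xt' 0 + x' 0 * (y 0 ^ 2 - y t ^ 2) := by
  have hconserved : ∀ t, HasDerivAt (fun t => xt' t + x' 0 * y t ^ 2) 0 t := fun t =>
    ((hxt' t).add (((hy t).pow 2).const_mul (x' 0))).congr_deriv (by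
      rw [eq_of_hasDerivAt_zero hx' t]; push_cast; ring)
  have := eq_of_hasDerivAt_zero hconserved t
  linear_combination this

end Geodesic

/-- For the manifold `S_-` (i.e. `f(y) = -½y²`), the exponential map at every point is
a bijection `ℝ³ → ℝ³`.  Here `(X P v, XT P v, Y P v) : ℝ → ℝ³` is the unique global
solution of the geodesic system `x'' = 0`, `x̃'' = -2 y x' y'`, `y'' = y (x')²` with
initial position `P` and initial velocity `v` at `t = 0`, and the exponential map is
`E P v = (X P v 1, XT P v 1, Y P v 1)`. -/
theorem S_minus_exponential_map_bijective
    (X XT Y X' XT' Y' : (ℝ × ℝ × ℝ) → (ℝ × ℝ × ℝ) → ℝ → ℝ)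
    (hX : ∀ P v t, HasDerivAt (X P v) (X' P v t) t)
    (hX' : ∀ P v t, HasDerivAt (X' P v) 0 t)
    (hXT : ∀ P v t, HasDerivAt (XT P v) (XT' P v t) t)
    (hXT' : ∀ P v t, HasDerivAt (XT' P v) (-(2 * Y P v t * X' P v t * Y' P v t)) t)
    (hY : ∀ P v t, HasDerivAt (Y P v) (Y' P v t) t)
    (hY' : ∀ P v t, HasDerivAt (Y' P v) (Y P v t * (X' P v t) ^ 2) t)
    (hinit : ∀ P v : ℝ × ℝ × ℝ,
      X P v 0 = P.1 ∧ XT P v 0 = P.2.1 ∧ Y P v 0 = P.2.2 ∧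
      X' P v 0 = v.1 ∧ XT' P v 0 = v.2.1 ∧ Y' P v 0 = v.2.2)
    (E : (ℝ × ℝ × ℝ) → (ℝ × ℝ × ℝ) → (ℝ × ℝ × ℝ))
    (hE : ∀ P v, E P v = (X P v 1, XT P v 1, Y P v 1)) :
    ∀ P, Function.Bijective (E P) := by
  intro P
  have hx' (v : ℝ × ℝ × ℝ) (t : ℝ) : X' P v t = v.1 :=
    (eq_of_hasDerivAt_zero (hX' P v) t).trans (hinit P v).2.2.2.1
  have hx_one (v : ℝ × ℝ × ℝ) : X P v 1 = P.1 + v.1 := by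
    rw [eq_add_mul_of_hasDerivAt (f := X P v) (fun t => hx' v t ▸ hX P v t) 1, (hinit P v).1,
      mul_one]
  have hy (v : ℝ × ℝ × ℝ) (t : ℝ) :
      Y P v t = P.2.2 * cosh (v.1 * t) + v.2.2 * sinhDiv v.1 t := by
    obtain ⟨-, -, hy₀, hx'₀, -, hy'₀⟩ := hinit P v
    rw [geodesic_y_eq (hX' P v) (hY P v) (hY' P v), hy₀, hx'₀, hy'₀]
  have hxt_one (v : ℝ × ℝ × ℝ) : XT P v 1 = XT P (v.1, 0, v.2.2) 1 + v.2.1 := by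
    have hxt' (w : ℝ × ℝ × ℝ) (t : ℝ) :
        XT' P w t = w.2.1 + w.1 * (P.2.2 ^ 2 - Y P w t ^ 2) := by
      rw [geodesic_xt'_eq (hX' P w) (hXT' P w) (hY P w), (hinit P w).2.2.2.2.1,
        (hinit P w).2.2.1, hx']
    rw [eq_add_mul_of_hasDerivAt_eq_add (hXT P v) (hXT P (v.1, 0, v.2.2))
      (fun t => by simp only [hxt', hy]; ring), (hinit P v).2.1, (hinit P _).2.1]
    ring
  have hE_eq : E P = fun v =>
      (P.1 + v.1, XT P (v.1, 0, v.2.2) 1 + v.2.1, P.2.2 * cosh v.1 + v.2.2 * sinhDiv v.1 1) :=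
    funext fun v => by rw [hE, hx_one, hxt_one, hy, mul_one]
  rw [hE_eq]
  exact bijective_of_triangular P.1 (fun a d => XT P (a, 0, d) 1) (fun a => P.2.2 * cosh a)
    (fun a => sinhDiv a 1) fun a => (sinhDiv_pos a one_pos).ne'
end

section
/- Let f : ℝ → ℝ be any one of the functions f(y) = e^y, f(y) = e^y + y, or f(y) = e^y + e^{2y}. Then every maximal solution γ(t) = (x(t), x̃(t), y(t)) of the system of ordinary differential equations x'' = 0, x̃'' = 2f'(y) x' y', y'' = -f'(y)(x')² is defined on all of ℝ. (These are the geodesic equations of the Lorentzian manifolds N_{1,+}, N_{2,+}, N_{3,+}, so these manifolds are geodesically complete.) -/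
/-!
The first equation makes `x'` a constant `c`, after which `(y, y')` solves the autonomous system
`(y, y')' = (y', -c² f'(y))`. As `f' ≥ 0`, `y` is concave, so on a bounded time interval it stays
below its tangent line at the initial time. Below any level the force `c² f'` is Lipschitz
(`f''` is nonnegative and nondecreasing), so truncating it at that bound gives a globally
Lipschitz system, whose solutions exist for all time and solve the original system on the
interval. Local uniqueness glues these into a global solution, and `x`, `x̃` are then recovered by
integration.
-/

open Set Metric Topology
open scoped NNReal

theorem ConcaveOn.le_add_mul_sub_of_hasDerivWithinAt {S : Set ℝ} {f : ℝ → ℝ} {x y f' : ℝ}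
    (hf : ConcaveOn ℝ S f) (hx : x ∈ S) (hy : y ∈ S) (hf' : HasDerivWithinAt f f' S x) :
    f y ≤ f x + f' * (y - x) := by
  rcases lt_trichotomy x y with hxy | rfl | hxy
  · have := hf.slope_le_of_hasDerivWithinAt hx hy hxy hf'
    rw [slope_def_field, div_le_iff₀ (sub_pos.2 hxy)] at this
    linarith
  · simp
  · have := hf.le_slope_of_hasDerivWithinAt hy hx hxy hf'
    rw [slope_def_field, le_div_iff₀ (sub_pos.2 hxy)] at this
    linarith

theorem IsOpen.exists_hasDerivAt_eqOn {s : Set ℝ} (hs : IsOpen s) (hs' : IsPreconnected s)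
    {u F : ℝ → ℝ} (hF : Continuous F) (hu : ∀ t ∈ s, HasDerivAt u (F t) t) :
    ∃ U : ℝ → ℝ, (∀ t, HasDerivAt U (F t) t) ∧ EqOn u U s := by
  have hprim : ∀ (t₀ c t : ℝ), HasDerivAt (fun t => c + ∫ r in t₀..t, F r) (F t) t :=
    fun t₀ c t => ((hF.integral_hasStrictDerivAt t₀ t).hasDerivAt).const_add c
  rcases s.eq_empty_or_nonempty with rfl | ⟨t₀, ht₀⟩
  · exact ⟨_, hprim 0 0, eqOn_empty _ _⟩
  refine ⟨_, hprim t₀ (u t₀), hs.eqOn_of_deriv_eq hs'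
    (fun t ht => (hu t ht).differentiableAt.differentiableWithinAt)
    (fun t _ => (hprim t₀ (u t₀) t).differentiableAt.differentiableWithinAt)
    (fun t ht => by rw [(hu t ht).deriv, (hprim t₀ (u t₀) t).deriv]) ht₀ (by simp)⟩

theorem locallyLipschitz_of_forall_lipschitzOnWith_Iic {φ : ℝ → ℝ}
    (hφ : ∀ R, ∃ K, LipschitzOnWith K φ (Iic R)) : LocallyLipschitz φ := fun y =>
  let ⟨K, hK⟩ := hφ (y + 1)
  ⟨K, Iic (y + 1), Iic_mem_nhds (lt_add_one y), hK⟩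

theorem lipschitzOnWith_Iic_of_hasDerivAt_of_monotone {g G : ℝ → ℝ}
    (hg : ∀ y, HasDerivAt g (G y) y) (hG₀ : ∀ y, 0 ≤ G y) (hGm : Monotone G) (R : ℝ) :
    LipschitzOnWith (G R).toNNReal g (Iic R) := by
  refine (convex_Iic R).lipschitzOnWith_of_nnnorm_hasDerivWithin_le
    (fun y _ => (hg y).hasDerivWithinAt) fun y hy => ?_
  rw [← NNReal.coe_le_coe, coe_nnnorm, Real.norm_of_nonneg (hG₀ y), Real.coe_toNNReal _ (hG₀ R)]
  exact hGm hy

section IntegralCurve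

variable {E : Type*} [NormedAddCommGroup E] [NormedSpace ℝ E]

theorem IsIntegralCurveOn.piecewise_Icc {γ γ' : ℝ → E} {v : ℝ → E → E} {a b c : ℝ}
    (hγ : IsIntegralCurveOn γ v (Icc a c)) (hγ' : IsIntegralCurveOn γ' v (Icc c b))
    (hc : γ c = γ' c) :
    IsIntegralCurveOn (fun t => if t ≤ c then γ t else γ' t) v (Icc a c ∪ Icc c b) := by
  intro t _
  refine HasDerivWithinAt.union ?_ ?_
  · by_cases ht : t ∈ Icc a c
    · have hδ : (if t ≤ c then γ t else γ' t) = γ t := if_pos ht.2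
      beta_reduce
      rw [hδ]
      exact (hγ t ht).congr (fun s hs => if_pos hs.2) hδ
    · exact HasFDerivWithinAt.of_notMem_closure (by rwa [closure_Icc])
  · by_cases ht : t ∈ Icc c b
    · have hδ : ∀ s ∈ Icc c b, (if s ≤ c then γ s else γ' s) = γ' s := by
        intro s hs
        split_ifs with hsc
        · rw [le_antisymm hsc hs.1, hc]
        · rfl
      beta_reduce
      rw [hδ t ht]
      exact (hγ' t ht).congr hδ (hδ t ht)
    · exact HasFDerivWithinAt.of_notMem_closure (by rwa [closure_Icc])

variable {v : E → E}

theorem ODE_solution_unique_of_locallyLipschitz_of_mem_Icc (hv : LocallyLipschitz v)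
    {γ γ' : ℝ → E} {a b t₀ : ℝ} (hγ : ∀ t ∈ Icc a b, HasDerivAt γ (v (γ t)) t)
    (hγ' : ∀ t ∈ Icc a b, HasDerivAt γ' (v (γ' t)) t) (ht₀ : t₀ ∈ Icc a b)
    (h : γ t₀ = γ' t₀) : EqOn γ γ' (Icc a b) := by
  have hc : ContinuousOn γ (Icc a b) := HasDerivAt.continuousOn hγ
  have hc' : ContinuousOn γ' (Icc a b) := HasDerivAt.continuousOn hγ'
  set S := γ '' Icc a b ∪ γ' '' Icc a b
  obtain ⟨L, hL⟩ := hv.locallyLipschitzOn.exists_lipschitzOnWith_of_compact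
    ((isCompact_Icc.image_of_continuousOn hc).union (isCompact_Icc.image_of_continuousOn hc'))
  have hS : ∀ t ∈ Icc a b, γ t ∈ S ∧ γ' t ∈ S := fun t ht =>
    ⟨Or.inl (mem_image_of_mem γ ht), Or.inr (mem_image_of_mem γ' ht)⟩
  rw [← Icc_union_Icc_eq_Icc ht₀.1 ht₀.2]
  have hleft : Ioc a t₀ ⊆ Icc a b := fun t ht => ⟨ht.1.le, ht.2.trans ht₀.2⟩
  have hright : Ico t₀ b ⊆ Icc a b := fun t ht => ⟨ht₀.1.trans ht.1, ht.2.le⟩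
  refine EqOn.union ?_ ?_
  · exact ODE_solution_unique_of_mem_Icc_left (v := fun _ => v) (s := fun _ => S)
      (fun _ _ => hL) (hc.mono (Icc_subset_Icc_right ht₀.2))
      (fun t ht => (hγ t (hleft ht)).hasDerivWithinAt) (fun t ht => (hS t (hleft ht)).1)
      (hc'.mono (Icc_subset_Icc_right ht₀.2))
      (fun t ht => (hγ' t (hleft ht)).hasDerivWithinAt) (fun t ht => (hS t (hleft ht)).2) h
  · exact ODE_solution_unique_of_mem_Icc_right (v := fun _ => v) (s := fun _ => S)
      (fun _ _ => hL) (hc.mono (Icc_subset_Icc_left ht₀.1))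
      (fun t ht => (hγ t (hright ht)).hasDerivWithinAt) (fun t ht => (hS t (hright ht)).1)
      (hc'.mono (Icc_subset_Icc_left ht₀.1))
      (fun t ht => (hγ' t (hright ht)).hasDerivWithinAt) (fun t ht => (hS t (hright ht)).2) h

theorem ODE_solution_unique_of_locallyLipschitz_of_ordConnected (hv : LocallyLipschitz v)
    {γ γ' : ℝ → E} {s : Set ℝ} (hs : s.OrdConnected) {t₀ : ℝ}
    (hγ : ∀ t ∈ s, HasDerivAt γ (v (γ t)) t) (hγ' : ∀ t ∈ s, HasDerivAt γ' (v (γ' t)) t)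
    (ht₀ : t₀ ∈ s) (h : γ t₀ = γ' t₀) : EqOn γ γ' s := fun t ht =>
  have hsub : uIcc t₀ t ⊆ s := hs.uIcc_subset ht₀ ht
  ODE_solution_unique_of_locallyLipschitz_of_mem_Icc hv (fun u hu => hγ u (hsub hu))
    (fun u hu => hγ' u (hsub hu)) left_mem_uIcc h right_mem_uIcc

theorem exists_isIntegralCurve_of_forall_isIntegralCurveOn_Icc (hv : LocallyLipschitz v)
    {t₀ : ℝ} {x₀ : E} (h : ∀ T, ∃ γ : ℝ → E, γ t₀ = x₀ ∧
      IsIntegralCurveOn γ (fun _ => v) (Icc (t₀ - T) (t₀ + T))) :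
    ∃ γ : ℝ → E, γ t₀ = x₀ ∧ IsIntegralCurve γ (fun _ => v) := by
  choose Γ hΓ₀ hΓ using h
  have hderiv : ∀ T, ∀ t ∈ Ioo (t₀ - T) (t₀ + T), HasDerivAt (Γ T) (v (Γ T t)) t :=
    fun T t ht => (hΓ T t (Ioo_subset_Icc_self ht)).hasDerivAt (Icc_mem_nhds ht.1 ht.2)
  have hagree : ∀ T T' t, |t - t₀| < T → |t - t₀| < T' → Γ T t = Γ T' t := by
    intro T T' t hT hT'
    set m := min T T'
    have hm : |t - t₀| < m := lt_min hT hT'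
    have hsub : ∀ T'', m ≤ T'' → Ioo (t₀ - m) (t₀ + m) ⊆ Ioo (t₀ - T'') (t₀ + T'') :=
      fun T'' hT'' => Ioo_subset_Ioo (by linarith) (by linarith)
    have ht₀ : t₀ ∈ Ioo (t₀ - m) (t₀ + m) := by
      have := (abs_nonneg _).trans_lt hm; constructor <;> linarith
    exact ODE_solution_unique_of_locallyLipschitz_of_ordConnected hv ordConnected_Ioo
      (fun u hu => hderiv T u (hsub T (min_le_left _ _) hu))
      (fun u hu => hderiv T' u (hsub T' (min_le_right _ _) hu)) ht₀ (by rw [hΓ₀, hΓ₀])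
      (by obtain ⟨h₁, h₂⟩ := abs_lt.1 hm; constructor <;> linarith)
  refine ⟨fun t => Γ (|t - t₀| + 1) t, hΓ₀ _, fun t => ?_⟩
  have hev : (fun s => Γ (|s - t₀| + 1) s) =ᶠ[𝓝 t] Γ (|t - t₀| + 2) := by
    have hcont : Continuous fun s => |s - t₀| := by fun_prop
    filter_upwards [hcont.continuousAt.eventually_lt continuousAt_const
      (lt_add_one |t - t₀|)] with s hs
    exact hagree _ _ s (by linarith) (by linarith)
  show HasDerivAt _ (v (Γ (|t - t₀| + 1) t)) t
  rw [hev.eq_of_nhds]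
  refine (hderiv _ t ?_).congr_of_eventuallyEq hev
  obtain ⟨h₁, h₂⟩ := abs_lt.1 (lt_add_of_pos_right |t - t₀| two_pos)
  constructor <;> linarith

theorem exists_isIntegralCurve_eqOn_of_locallyLipschitz (hv : LocallyLipschitz v)
    (hglobal : ∀ (t₀ : ℝ) (x₀ : E), ∃ Γ : ℝ → E, Γ t₀ = x₀ ∧ IsIntegralCurve Γ (fun _ => v))
    {s : Set ℝ} (hs : s.OrdConnected) {γ : ℝ → E} (hγ : ∀ t ∈ s, HasDerivAt γ (v (γ t)) t) :
    ∃ Γ : ℝ → E, IsIntegralCurve Γ (fun _ => v) ∧ EqOn γ Γ s := by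
  rcases s.eq_empty_or_nonempty with rfl | ⟨t₀, ht₀⟩
  · obtain ⟨Γ, -, hΓ⟩ := hglobal 0 0
    exact ⟨Γ, hΓ, eqOn_empty _ _⟩
  obtain ⟨Γ, hΓ₀, hΓ⟩ := hglobal t₀ (γ t₀)
  exact ⟨Γ, hΓ, ODE_solution_unique_of_locallyLipschitz_of_ordConnected hv hs hγ
    (fun t _ => hΓ t) ht₀ hΓ₀.symm⟩

variable [CompleteSpace E] {K : ℝ≥0}

theorem LipschitzWith.exists_isIntegralCurveOn_Icc_inv_add_one (hv : LipschitzWith K v) (t₀ : ℝ)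
    (x₀ : E) : ∃ γ : ℝ → E, γ t₀ = x₀ ∧
      IsIntegralCurveOn γ (fun _ => v) (Icc (t₀ - (K + 1 : ℝ)⁻¹) (t₀ + (K + 1 : ℝ)⁻¹)) := by
  have hε : 0 ≤ (K + 1 : ℝ)⁻¹ := by positivity
  -- The radius `‖v x₀‖` makes the admissible time `(K + 1)⁻¹` independent of `x₀`.
  set a : ℝ≥0 := ‖v x₀‖₊
  have hPL : IsPicardLindelof (fun _ => v) (tmin := t₀ - (K + 1 : ℝ)⁻¹)
      (tmax := t₀ + (K + 1 : ℝ)⁻¹) ⟨t₀, by constructor <;> linarith⟩ x₀ a 0 ((K + 1) * a) K := by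
    refine ⟨fun _ _ => hv.lipschitzOnWith, fun _ _ => continuousOn_const, fun _ _ x hx => ?_, ?_⟩
    · have hdist : dist (v x) (v x₀) ≤ K * a := (hv.dist_le_mul x x₀).trans
        (mul_le_mul_of_nonneg_left (mem_closedBall.1 hx) K.2)
      calc ‖v x‖ ≤ ‖v x₀‖ + dist (v x) (v x₀) := by
            rw [dist_eq_norm]; exact norm_le_norm_add_norm_sub' (v x) (v x₀)
        _ ≤ ((K + 1) * a : ℝ≥0) := by
              push_cast; simp only [a, coe_nnnorm] at hdist ⊢; linarith
    · have hK : (K + 1 : ℝ) ≠ 0 := by positivity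
      push_cast
      rw [add_sub_cancel_left, sub_sub_cancel, max_self, mul_comm, ← mul_assoc,
        inv_mul_cancel₀ hK, one_mul, sub_zero]
  exact hPL.exists_eq_forall_mem_Icc_hasDerivWithinAt₀

theorem LipschitzWith.exists_isIntegralCurveOn_Icc (hv : LipschitzWith K v) (t₀ : ℝ)
    (x₀ : E) (T : ℝ) : ∃ γ : ℝ → E, γ t₀ = x₀ ∧
      IsIntegralCurveOn γ (fun _ => v) (Icc (t₀ - T) (t₀ + T)) := by
  set ε : ℝ := (K + 1 : ℝ)⁻¹
  have hε : 0 < ε := by positivity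
  have hstep : ∀ n : ℕ, ∃ γ : ℝ → E, γ t₀ = x₀ ∧
      IsIntegralCurveOn γ (fun _ => v) (Icc (t₀ - (n + 1) * ε) (t₀ + (n + 1) * ε)) := by
    intro n
    induction n with
    | zero => simpa using hv.exists_isIntegralCurveOn_Icc_inv_add_one t₀ x₀
    | succ n ih =>
      obtain ⟨γ, hγ₀, hγ⟩ := ih
      set m : ℝ := (n + 1) * ε
      have hm : 0 < m := by positivity
      obtain ⟨β, hβ₀, hβ⟩ := hv.exists_isIntegralCurveOn_Icc_inv_add_one (t₀ + m) (γ (t₀ + m))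
      obtain ⟨α, hα₀, hα⟩ := hv.exists_isIntegralCurveOn_Icc_inv_add_one (t₀ - m) (γ (t₀ - m))
      have hright := hγ.piecewise_Icc (hβ.mono (Icc_subset_Icc (by linarith) le_rfl))
        hβ₀.symm
      rw [Icc_union_Icc_eq_Icc (by linarith) (by linarith)] at hright
      have hboth := (hα.mono (Icc_subset_Icc le_rfl (by linarith))).piecewise_Icc hright
        (by simp [hα₀, show t₀ - m ≤ t₀ + m by linarith])
      rw [Icc_union_Icc_eq_Icc (by linarith) (by linarith)] at hboth
      have hm' : ((n + 1 : ℕ) + 1 : ℝ) * ε = m + ε := by push_cast; ring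
      rw [hm', ← sub_sub, ← add_assoc]
      exact ⟨_, by simp [hγ₀, not_le.2 hm, hm.le], hboth⟩
  obtain ⟨n, hn⟩ := exists_nat_ge (T / ε)
  obtain ⟨γ, hγ₀, hγ⟩ := hstep n
  have hT : T ≤ (n + 1) * ε := by
    rw [div_le_iff₀ hε] at hn
    linarith
  exact ⟨γ, hγ₀, hγ.mono (Icc_subset_Icc (by linarith) (by linarith))⟩

end IntegralCurve

def newtonField (φ : ℝ → ℝ) (p : ℝ × ℝ) : ℝ × ℝ := (p.2, -φ p.1)

section NewtonField

variable {φ : ℝ → ℝ}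

theorem LipschitzWith.newtonField {K : ℝ≥0} (hφ : LipschitzWith K φ) :
    LipschitzWith (max 1 K) (newtonField φ) := by
  have h := (LipschitzWith.prod_snd (α := ℝ) (β := ℝ)).prodMk
    (hφ.comp (LipschitzWith.prod_fst (α := ℝ) (β := ℝ))).neg
  rwa [mul_one] at h

theorem LocallyLipschitz.newtonField (hφ : LocallyLipschitz φ) :
    LocallyLipschitz (newtonField φ) :=
  LipschitzWith.prod_snd.locallyLipschitz.prodMk
    (hφ.comp LipschitzWith.prod_fst.locallyLipschitz).neg

theorem IsIntegralCurveOn.concaveOn_fst_of_newtonField (hφ₀ : ∀ y, 0 ≤ φ y) {γ : ℝ → ℝ × ℝ}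
    {a b : ℝ} (hγ : IsIntegralCurveOn γ (fun _ => newtonField φ) (Icc a b)) :
    ConcaveOn ℝ (Icc a b) (fun t => (γ t).1) := by
  have hint : ∀ t ∈ interior (Icc a b),
      HasDerivWithinAt γ (newtonField φ (γ t)) (interior (Icc a b)) t :=
    fun t ht => (hγ t (interior_subset ht)).mono interior_subset
  exact concaveOn_of_hasDerivWithinAt2_nonpos (convex_Icc a b)
    (continuous_fst.comp_continuousOn hγ.continuousOn) (fun t ht => (hint t ht).fst)
    (fun t ht => (hint t ht).snd) (fun t _ => neg_nonpos.2 (hφ₀ _))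

theorem exists_isIntegralCurveOn_Icc_newtonField (hφ₀ : ∀ y, 0 ≤ φ y)
    (hφ : ∀ R, ∃ K, LipschitzOnWith K φ (Iic R)) (t₀ : ℝ) (x₀ : ℝ × ℝ) (T : ℝ) :
    ∃ γ : ℝ → ℝ × ℝ, γ t₀ = x₀ ∧
      IsIntegralCurveOn γ (fun _ => newtonField φ) (Icc (t₀ - T) (t₀ + T)) := by
  set R := x₀.1 + |x₀.2| * T
  obtain ⟨K, hK⟩ := hφ R
  have hψ : LipschitzWith K fun y => φ (min y R) := by
    have h := hK.comp (LipschitzWith.id.min_const R).lipschitzOnWith (s := univ)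
      (fun y _ => mem_Iic.2 (min_le_right y R))
    rw [mul_one] at h
    exact lipschitzOnWith_univ.1 h
  obtain ⟨γ, hγ₀, hγ⟩ := hψ.newtonField.exists_isIntegralCurveOn_Icc t₀ x₀ T
  refine ⟨γ, hγ₀, fun t ht => ?_⟩
  have ht₀ : t₀ ∈ Icc (t₀ - T) (t₀ + T) := ⟨by linarith [ht.1, ht.2], by linarith [ht.1, ht.2]⟩
  -- `y` is concave, so it stays below its tangent line at `t₀`, hence below `R`.
  have hle : (γ t).1 ≤ R := by
    have hconcave := hγ.concaveOn_fst_of_newtonField fun _ => hφ₀ _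
    have htangent := hconcave.le_add_mul_sub_of_hasDerivWithinAt ht₀ ht (hγ t₀ ht₀).fst
    rw [hγ₀] at htangent
    have hslope : x₀.2 * (t - t₀) ≤ |x₀.2| * T :=
      calc x₀.2 * (t - t₀) ≤ |x₀.2| * |t - t₀| := by rw [← abs_mul]; exact le_abs_self _
        _ ≤ |x₀.2| * T := mul_le_mul_of_nonneg_left
          (abs_sub_le_iff.2 ⟨by linarith [ht.2], by linarith [ht.1]⟩) (abs_nonneg _)
    exact htangent.trans (by simp only [newtonField]; linarith)
  have hfield : newtonField (fun y => φ (min y R)) (γ t) = newtonField φ (γ t) := by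
    simp only [newtonField, min_eq_left hle]
  show HasDerivWithinAt γ (newtonField φ (γ t)) _ t
  exact hfield ▸ hγ t ht

theorem exists_isIntegralCurve_newtonField (hφ₀ : ∀ y, 0 ≤ φ y)
    (hφ : ∀ R, ∃ K, LipschitzOnWith K φ (Iic R)) (t₀ : ℝ) (x₀ : ℝ × ℝ) :
    ∃ γ : ℝ → ℝ × ℝ, γ t₀ = x₀ ∧ IsIntegralCurve γ (fun _ => newtonField φ) :=
  exists_isIntegralCurve_of_forall_isIntegralCurveOn_Icc
    (locallyLipschitz_of_forall_lipschitzOnWith_Iic hφ).newtonField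
    (exists_isIntegralCurveOn_Icc_newtonField hφ₀ hφ t₀ x₀)

theorem exists_isIntegralCurve_newtonField_eqOn (hφ₀ : ∀ y, 0 ≤ φ y)
    (hφ : ∀ R, ∃ K, LipschitzOnWith K φ (Iic R)) {s : Set ℝ} (hs : s.OrdConnected)
    {y y' : ℝ → ℝ} (hy : ∀ t ∈ s, HasDerivAt y (y' t) t)
    (hy' : ∀ t ∈ s, HasDerivAt y' (-φ (y t)) t) :
    ∃ Γ : ℝ → ℝ × ℝ, IsIntegralCurve Γ (fun _ => newtonField φ) ∧
      ∀ t ∈ s, y t = (Γ t).1 ∧ y' t = (Γ t).2 := by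
  obtain ⟨Γ, hΓ, hyΓ⟩ := exists_isIntegralCurve_eqOn_of_locallyLipschitz
    (locallyLipschitz_of_forall_lipschitzOnWith_Iic hφ).newtonField
    (exists_isIntegralCurve_newtonField hφ₀ hφ) hs (γ := fun t => (y t, y' t))
    (fun t ht => (hy t ht).prodMk (hy' t ht))
  exact ⟨Γ, hΓ, fun t ht => Prod.ext_iff.1 (hyΓ ht)⟩

end NewtonField

theorem N_plus_deriv_nonneg_and_lipschitzOnWith_Iic {f : ℝ → ℝ}
    (hf : f = (fun y => Real.exp y) ∨ f = (fun y => Real.exp y + y) ∨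
      f = (fun y => Real.exp y + Real.exp (2 * y))) :
    (∀ y, 0 ≤ deriv f y) ∧ ∀ R, ∃ K, LipschitzOnWith K (deriv f) (Iic R) := by
  obtain ⟨g, G, hfg, hgG, hg₀, hG₀, hGm⟩ : ∃ g G : ℝ → ℝ, (∀ y, HasDerivAt f (g y) y) ∧
      (∀ y, HasDerivAt g (G y) y) ∧ (∀ y, 0 ≤ g y) ∧ (∀ y, 0 ≤ G y) ∧ Monotone G := by
    have hexp2 : ∀ y, HasDerivAt (fun y => Real.exp (2 * y)) (2 * Real.exp (2 * y)) y :=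
      fun y => by simpa [mul_comm] using ((hasDerivAt_id y).const_mul 2).exp
    rcases hf with rfl | rfl | rfl
    · exact ⟨Real.exp, Real.exp, Real.hasDerivAt_exp, Real.hasDerivAt_exp,
        fun y => (Real.exp_pos y).le, fun y => (Real.exp_pos y).le, Real.exp_monotone⟩
    · exact ⟨fun y => Real.exp y + 1, Real.exp,
        fun y => (Real.hasDerivAt_exp y).add (hasDerivAt_id y),
        fun y => (Real.hasDerivAt_exp y).add_const 1, fun y => by positivity,
        fun y => (Real.exp_pos y).le, Real.exp_monotone⟩
    · refine ⟨fun y => Real.exp y + 2 * Real.exp (2 * y),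
        fun y => Real.exp y + 4 * Real.exp (2 * y),
        fun y => (Real.hasDerivAt_exp y).add (hexp2 y), fun y => ?_, fun y => by positivity,
        fun y => by positivity, fun a b hab => by dsimp only; gcongr⟩
      exact ((Real.hasDerivAt_exp y).add ((hexp2 y).const_mul 2)).congr_deriv (by ring)
  have hderiv : deriv f = g := funext fun y => (hfg y).deriv
  exact ⟨hderiv ▸ hg₀, fun R =>
    ⟨_, hderiv ▸ lipschitzOnWith_Iic_of_hasDerivAt_of_monotone hgG hG₀ hGm R⟩⟩

/-- Geodesic completeness of the manifolds `N_{1,+}`, `N_{2,+}`, `N_{3,+}`: for `f` any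
of the functions `e^y`, `e^y + y`, `e^y + e^{2y}`, every maximal solution of the
geodesic system `x'' = 0`, `x̃'' = 2 f'(y) x' y'`, `y'' = -f'(y) (x')²` is defined on
all of `ℝ`.  Equivalently, every solution defined on an open interval `I` extends to a
solution defined on all of `ℝ`. -/
theorem N_plus_geodesically_complete
    (f : ℝ → ℝ)
    (hf : f = (fun y => Real.exp y) ∨ f = (fun y => Real.exp y + y) ∨
      f = (fun y => Real.exp y + Real.exp (2 * y)))
    (I : Set ℝ) (hIopen : IsOpen I) (hIconn : I.OrdConnected)
    (x xt y x' xt' y' : ℝ → ℝ)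
    (hx : ∀ t ∈ I, HasDerivAt x (x' t) t)
    (hx' : ∀ t ∈ I, HasDerivAt x' 0 t)
    (hxt : ∀ t ∈ I, HasDerivAt xt (xt' t) t)
    (hxt' : ∀ t ∈ I, HasDerivAt xt' (2 * deriv f (y t) * x' t * y' t) t)
    (hy : ∀ t ∈ I, HasDerivAt y (y' t) t)
    (hy' : ∀ t ∈ I, HasDerivAt y' (-(deriv f (y t) * (x' t) ^ 2)) t) :
    ∃ X XT Yg X' XT' Y' : ℝ → ℝ,
      (∀ t, HasDerivAt X (X' t) t) ∧
      (∀ t, HasDerivAt X' 0 t) ∧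
      (∀ t, HasDerivAt XT (XT' t) t) ∧
      (∀ t, HasDerivAt XT' (2 * deriv f (Yg t) * X' t * Y' t) t) ∧
      (∀ t, HasDerivAt Yg (Y' t) t) ∧
      (∀ t, HasDerivAt Y' (-(deriv f (Yg t) * (X' t) ^ 2)) t) ∧
      (∀ t ∈ I, X t = x t ∧ XT t = xt t ∧ Yg t = y t) := by
  obtain ⟨hf₀, hfL⟩ := N_plus_deriv_nonneg_and_lipschitzOnWith_Iic hf
  have hI := hIconn.isPreconnected
  obtain ⟨X', hX', hx'X'⟩ := hIopen.exists_hasDerivAt_eqOn hI continuous_const hx'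
  have hX'c : ∀ t, X' t = X' 0 := fun t => is_const_of_deriv_eq_zero
    (fun t => (hX' t).differentiableAt) (fun t => (hX' t).deriv) t 0
  obtain ⟨Γ, hΓ, hyΓ⟩ := exists_isIntegralCurve_newtonField_eqOn
    (φ := fun z => X' 0 ^ 2 * deriv f z) (fun z => mul_nonneg (sq_nonneg _) (hf₀ z))
    (fun R => let ⟨_, hK⟩ := hfL R; ⟨_, (lipschitzWith_smul (X' 0 ^ 2)).comp_lipschitzOnWith hK⟩)
    hIconn hy (fun t ht => (hy' t ht).congr_deriv (by rw [hx'X' ht, hX'c t]; ring))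
  have hΓc := hΓ.continuous
  have hf'c := (locallyLipschitz_of_forall_lipschitzOnWith_Iic hfL).continuous
  have hX'cont : Continuous X' := continuous_iff_continuousAt.2 fun t => (hX' t).continuousAt
  obtain ⟨X, hX, hxX⟩ := hIopen.exists_hasDerivAt_eqOn hI hX'cont
    (fun t ht => hx'X' ht ▸ hx t ht)
  obtain ⟨XT', hXT', hxtXT'⟩ := hIopen.exists_hasDerivAt_eqOn hI
    (F := fun t => 2 * deriv f (Γ t).1 * X' t * (Γ t).2) (by fun_prop) (fun t ht => by
      rw [← (hyΓ t ht).1, ← (hyΓ t ht).2, ← hx'X' ht]; exact hxt' t ht)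
  obtain ⟨XT, hXT, hxtXT⟩ := hIopen.exists_hasDerivAt_eqOn hI
    (continuous_iff_continuousAt.2 fun t => (hXT' t).continuousAt)
    (fun t ht => hxtXT' ht ▸ hxt t ht)
  refine ⟨X, XT, fun t => (Γ t).1, X', XT', fun t => (Γ t).2, hX, hX', hXT, hXT',
    fun t => (hΓ t).fst, fun t => HasDerivAt.congr_deriv (hΓ t).snd ?_,
    fun t ht => ⟨(hxX ht).symm, (hxtXT ht).symm, (hyΓ t ht).1.symm⟩⟩
  simp only [newtonField, hX'c t]
  ring
end
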